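/- arXiv:1102.5536 — 4 statements merged into one kernel-verified Lean document; each statement's English description precedes it below -/
import Mathlib

section
/- Let (S_n) be a real random walk with positive drift E[S_1] > 0 and E[S_1^2] < ∞, and let (a_i, S_i − S_{i−1})_{i≥1} be an i.i.d. sequence with a_i ≥ 0 almost surely. Then for every p ≥ 1 with E[a_1^p] < ∞ and every κ > 0 there is a constant c_{p,κ} > 0 such that E_x[ ( ∑_{k=0}^{τ_t^+ − 1} a_{k+1} · e^{κ(S_k − t)} )^p ] ≤ c_{p,κ} for all t > 0 and all x ≤ t. -/
open MeasureTheory ProbabilityTheory Filter Topology Real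
open scoped ENNReal NNReal

variable {Ω : Type*} [MeasurableSpace Ω]

/-- The random walk started at `x` with increments `X`. -/
noncomputable def walk (X : ℕ → Ω → ℝ) (x : ℝ) (n : ℕ) (ω : Ω) : ℝ :=
  x + ∑ i ∈ Finset.range n, X i ω

/-- `τ_a^+`: the first time the walk (started at `x`) exceeds level `a`, as an
extended natural number (`⊤` if the walk never exceeds `a`). -/
noncomputable def hitAbove (X : ℕ → Ω → ℝ) (x a : ℝ) (ω : Ω) : ℕ∞ :=
  ⨅ (n : ℕ) (_ : a < walk X x n ω), (n : ℕ∞)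

/-- `τ_a^-`: the first time the walk (started at `x`) goes below level `a`. -/
noncomputable def hitBelow (X : ℕ → Ω → ℝ) (x a : ℝ) (ω : Ω) : ℕ∞ :=
  ⨅ (n : ℕ) (_ : walk X x n ω < a), (n : ℕ∞)

/-- `S_{τ_a^+}`: the walk stopped when it first exceeds `a` (junk value if never). -/
noncomputable def stopAbove (X : ℕ → Ω → ℝ) (x a : ℝ) (ω : Ω) : ℝ :=
  walk X x (hitAbove X x a ω).toNat ω

/-- `S_{τ_a^-}`: the walk stopped when it first goes below `a` (junk value if never). -/
noncomputable def stopBelow (X : ℕ → Ω → ℝ) (x a : ℝ) (ω : Ω) : ℝ :=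
  walk X x (hitBelow X x a ω).toNat ω

/-- A real random variable has non-arithmetic distribution: its law is not
supported on any lattice `hℤ`. -/
def NonArithmetic (Y : Ω → ℝ) (μ : Measure Ω) : Prop :=
  ¬ ∃ h : ℝ, ∀ᵐ ω ∂μ, ∃ k : ℤ, Y ω = k * h

/-!
Split the times before `τ_t^+` according to the unit band `t - S_k ∈ [j, j + 1)` containing the
walk and the number `n` of earlier visits to that band. By Minkowski's inequality the `L^p` norm
of the sum is at most `∑_{j,n} e^{-κ j} ‖∑_k a_{k+1} 1{k is the n-th visit to band j}‖_p`. At most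
one `k` contributes, and `a_{k+1}` is independent of the past event selecting it, so the inner
norm is `‖a_1‖_p P(at least n + 1 visits)^{1/p}`. By the law of large numbers some `m` has
`q := P(S_n - S_0 ≤ 1 for some n ≥ m) < 1`. Visits to a band that are `m` visits apart are at
least `m` steps apart with displacement at most `1`, so independence at the earlier visit gives
`P(at least n + 1 visits) ≤ q ^ ⌊n / m⌋`, and the double series converges.
-/

open Function

section Minkowski

variable {α : Type*} {m : MeasurableSpace α} {μ : Measure α}

theorem ENNReal.lintegral_Lp_tsum_le {ι : Type*} [Countable ι] {f : ι → α → ℝ≥0∞}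
    (hf : ∀ i, AEMeasurable (f i) μ) {p : ℝ} (hp : 1 ≤ p) :
    (∫⁻ a, (∑' i, f i a) ^ p ∂μ) ^ p⁻¹ ≤ ∑' i, (∫⁻ a, f i a ^ p ∂μ) ^ p⁻¹ := by
  have hp0 : 0 < p := zero_lt_one.trans_le hp
  have hsum_mono : Monotone fun (s : Finset ι) a => (∑ i ∈ s, f i a) ^ p :=
    fun s t hst a => ENNReal.rpow_le_rpow (Finset.sum_le_sum_of_subset hst) hp0.le
  have hfinite (s : Finset ι) : (∫⁻ a, (∑ i ∈ s, f i a) ^ p ∂μ) ^ p⁻¹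
      ≤ ∑ i ∈ s, (∫⁻ a, f i a ^ p ∂μ) ^ p⁻¹ := by
    simpa [eLpNorm', Finset.sum_apply] using
      eLpNorm'_sum_le (s := s) (fun i _ => (hf i).aestronglyMeasurable) hp
  calc (∫⁻ a, (∑' i, f i a) ^ p ∂μ) ^ p⁻¹
      = (⨆ s : Finset ι, ∫⁻ a, (∑ i ∈ s, f i a) ^ p ∂μ) ^ p⁻¹ := by
        rw [← lintegral_iSup_directed (fun s => by fun_prop) hsum_mono.directed_le]
        simp_rw [ENNReal.tsum_eq_iSup_sum]
        exact congrArg (· ^ p⁻¹) (lintegral_congr fun a => (ENNReal.orderIsoRpow p hp0).map_iSup _)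
    _ = ⨆ s : Finset ι, (∫⁻ a, (∑ i ∈ s, f i a) ^ p ∂μ) ^ p⁻¹ :=
        (ENNReal.orderIsoRpow p⁻¹ (inv_pos.mpr hp0)).map_iSup _
    _ ≤ ⨆ s : Finset ι, ∑ i ∈ s, (∫⁻ a, f i a ^ p ∂μ) ^ p⁻¹ := iSup_mono hfinite
    _ = ∑' i, (∫⁻ a, f i a ^ p ∂μ) ^ p⁻¹ := ENNReal.tsum_eq_iSup_sum.symm

end Minkowski

theorem tsum_indicator_rpow_of_pairwise_disjoint {α ι : Type*} {E : ι → Set α}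
    (hE : Pairwise (Disjoint on E)) (g : ι → α → ℝ≥0∞) {p : ℝ} (hp : 0 < p) (a : α) :
    (∑' i, (E i).indicator (g i) a) ^ p = ∑' i, (E i).indicator (fun a => g i a ^ p) a := by
  by_cases ha : ∃ i, a ∈ E i
  · obtain ⟨i, hi⟩ := ha
    have hout : ∀ j ≠ i, a ∉ E j := fun j hj haj => (hE hj).ne_of_mem haj hi rfl
    rw [tsum_eq_single i fun j hj => Set.indicator_of_notMem (hout j hj) _,
      tsum_eq_single i fun j hj => Set.indicator_of_notMem (hout j hj) _,
      Set.indicator_of_mem hi, Set.indicator_of_mem hi]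
  · rw [not_exists] at ha
    simp [Set.indicator_of_notMem (ha _), ENNReal.zero_rpow_of_pos hp]

theorem ENNReal.tsum_pow_div (η : ℝ≥0∞) (m : ℕ) [NeZero m] :
    ∑' n : ℕ, η ^ (n / m) = m * (1 - η)⁻¹ := by
  rw [← (Nat.divModEquiv m).symm.tsum_eq, ENNReal.tsum_prod']
  have hdiv (a : ℕ) (b : Fin m) : (a * m + b) / m = a := by
    rw [add_comm, Nat.add_mul_div_right _ _ (NeZero.pos m), Nat.div_eq_of_lt b.2, zero_add]
  simp [Nat.divModEquiv, hdiv, ENNReal.tsum_mul_left, ENNReal.tsum_geometric]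

theorem Nat.exists_count_eq_of_add_le_count {p : ℕ → Prop} [DecidablePred p] {i m n : ℕ}
    (hm : 0 < m) (h : i + m ≤ Nat.count p n) :
    ∃ k, p k ∧ Nat.count p k = i ∧ k + m ≤ n := by
  have hcard : ∀ hf : (Set.ofPred p).Finite, i < hf.toFinset.card :=
    fun hf => by have := Nat.count_le_card hf n; omega
  refine ⟨Nat.nth p i, Nat.nth_mem i hcard, Nat.count_nth hcard, ?_⟩
  have hlt : Nat.nth p i < n := Nat.nth_lt_of_lt_count (by omega)
  have hsplit := Nat.count_add p (Nat.nth p i + 1) (n - (Nat.nth p i + 1))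
  rw [Nat.add_sub_cancel' hlt, Nat.count_nth_succ hcard] at hsplit
  have := Nat.count_le (p := fun k => p (Nat.nth p i + 1 + k)) (n := n - (Nat.nth p i + 1))
  omega

section Visits

variable {Ω : Type*}

theorem walk_add (X : ℕ → Ω → ℝ) (x : ℝ) (k n : ℕ) (ω : Ω) :
    walk X x (k + n) ω = walk X x k ω + ∑ i ∈ Finset.range n, X (k + i) ω := by
  simp [walk, Finset.sum_range_add, add_assoc]

theorem walk_le_of_lt_hitAbove {X : ℕ → Ω → ℝ} {x a : ℝ} {k : ℕ} {ω : Ω}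
    (h : (k : ℕ∞) < hitAbove X x a ω) : walk X x k ω ≤ a := by
  by_contra! hk
  rw [hitAbove] at h
  exact h.not_ge (iInf₂_le k hk)

theorem measurable_walk {mΩ : MeasurableSpace Ω} {X : ℕ → Ω → ℝ} {n : ℕ}
    (hX : ∀ i < n, Measurable (X i)) (x : ℝ) : Measurable (walk X x n) :=
  measurable_const.add (Finset.measurable_sum _ fun i hi => hX i (Finset.mem_range.mp hi))

def partialSumLeOneAfter (X : ℕ → Ω → ℝ) (m : ℕ) : Set Ω :=
  {ω | ∃ n, m ≤ n ∧ ∑ j ∈ Finset.range n, X j ω ≤ 1}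

theorem measurableSet_partialSumLeOneAfter {mΩ : MeasurableSpace Ω} {X : ℕ → Ω → ℝ}
    (hX : ∀ i, Measurable (X i)) (m : ℕ) : MeasurableSet (partialSumLeOneAfter X m) := by
  simp only [partialSumLeOneAfter, Set.ofPred_exists]
  exact .iUnion fun n => .inter (.const _)
    (measurableSet_le (Finset.measurable_sum _ fun i _ => hX i) measurable_const)

open Classical in
/-- `nthVisit X x I n k` is the event that the walk visits `I` at time `k` for the `n`-th time,
visits being counted from `0`. -/
def nthVisit (X : ℕ → Ω → ℝ) (x : ℝ) (I : Set ℝ) (n k : ℕ) : Set Ω :=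
  {ω | walk X x k ω ∈ I ∧ Nat.count (fun l => walk X x l ω ∈ I) k = n}

theorem measurableSet_nthVisit {mΩ : MeasurableSpace Ω} {X : ℕ → Ω → ℝ} {k : ℕ}
    (hX : ∀ i < k, Measurable (X i)) (x : ℝ) {I : Set ℝ} (hI : MeasurableSet I) (n : ℕ) :
    MeasurableSet (nthVisit X x I n k) := by
  classical
  have hvisit : ∀ l ≤ k, MeasurableSet {ω | walk X x l ω ∈ I} := fun l hl =>
    measurable_walk (fun i hi => hX i (hi.trans_le hl)) x hI
  have hcount : Measurable fun ω => Nat.count (fun l => walk X x l ω ∈ I) k := by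
    simp_rw [Nat.count_eq_card_filter_range, Finset.card_filter]
    exact Finset.measurable_sum _ fun l hl =>
      Measurable.ite (hvisit l (Finset.mem_range.mp hl).le) measurable_const measurable_const
  exact (hvisit k le_rfl).inter (hcount (measurableSet_singleton n))

theorem pairwise_disjoint_nthVisit (X : ℕ → Ω → ℝ) (x : ℝ) (I : Set ℝ) (n : ℕ) :
    Pairwise (Disjoint on nthVisit X x I n) := by
  classical
  exact fun k k' hkk' => Set.disjoint_left.mpr fun _ ⟨hk, hkn⟩ ⟨hk', hk'n⟩ =>
    hkk' (Nat.count_injective hk hk' (hkn.trans hk'n.symm))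

/-- The `i`-th visit precedes the `(i + m)`-th one by at least `m` steps, and the walk moves by
at most `1` between two visits to `I`. -/
theorem nthVisit_add_subset (X : ℕ → Ω → ℝ) (x : ℝ) {I : Set ℝ}
    (hI : ∀ y ∈ I, ∀ z ∈ I, z ≤ y + 1) {m : ℕ} (hm : 0 < m) (i k' : ℕ) :
    nthVisit X x I (i + m) k' ⊆
      ⋃ k, nthVisit X x I i k ∩ partialSumLeOneAfter (fun j => X (k + j)) m := by
  classical
  rintro ω ⟨hk'I, hk'count⟩
  obtain ⟨k, hkI, hkcount, hkk'⟩ :=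
    Nat.exists_count_eq_of_add_le_count hm (p := fun l => walk X x l ω ∈ I) hk'count.ge
  have hstep := walk_add X x k (k' - k) ω
  rw [Nat.add_sub_cancel' (by omega)] at hstep
  refine Set.mem_iUnion.mpr ⟨k, ⟨hkI, hkcount⟩, k' - k, by omega, ?_⟩
  linarith [hI _ hkI _ hk'I]

/-- Each term before the first passage above `t` is charged to the unit band `t - S_k ∈ [j, j+1)`
containing the walk, and to the number of earlier visits to that band. -/
theorem tsum_ite_lt_hitAbove_le (X A : ℕ → Ω → ℝ) (x t : ℝ) {κ : ℝ} (hκ : 0 ≤ κ) (ω : Ω) :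
    (∑' k : ℕ, if (k : ℕ∞) < hitAbove X x t ω
        then ENNReal.ofReal (A k ω * Real.exp (κ * (walk X x k ω - t))) else 0)
      ≤ ∑' q : ℕ × ℕ, ENNReal.ofReal (Real.exp (-κ)) ^ q.1 *
        ∑' k, (nthVisit X x (Set.Ioc (t - q.1 - 1) (t - q.1)) q.2 k).indicator
          (fun ω => ENNReal.ofReal (A k ω)) ω := by
  simp_rw [← ENNReal.tsum_mul_left]
  rw [ENNReal.tsum_comm]
  refine ENNReal.tsum_le_tsum fun k => ?_
  split_ifs with hk
  · have hwalk := walk_le_of_lt_hitAbove hk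
    set j := ⌊t - walk X x k ω⌋₊
    have hband : walk X x k ω ∈ Set.Ioc (t - j - 1) (t - j) :=
      ⟨by linarith [Nat.lt_floor_add_one (t - walk X x k ω)],
        by linarith [Nat.floor_le (sub_nonneg.mpr hwalk)]⟩
    obtain ⟨n, hn⟩ : ∃ n, ω ∈ nthVisit X x (Set.Ioc (t - j - 1) (t - j)) n k := ⟨_, hband, rfl⟩
    refine le_trans ?_ (ENNReal.le_tsum (j, n))
    rw [Set.indicator_of_mem hn,
      ENNReal.ofReal_mul' (Real.exp_nonneg _), mul_comm]
    gcongr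
    rw [← ENNReal.ofReal_pow (Real.exp_nonneg _), ← Real.exp_nat_mul]
    refine ENNReal.ofReal_le_ofReal (Real.exp_le_exp.mpr ?_)
    nlinarith [hband.2]
  · exact zero_le

end Visits

section Probability

variable {μ : Measure Ω}

theorem ProbabilityTheory.iIndepFun.map_shift_eq {β : Type*} [MeasurableSpace β]
    {X : ℕ → Ω → β} (hX : ∀ i, Measurable (X i)) (hind : iIndepFun X μ)
    (hid : ∀ i, IdentDistrib (X i) (X 0) μ μ) (k : ℕ) :
    μ.map (fun ω n => X (k + n) ω) = μ.map (fun ω n => X n ω) := by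
  rw [(hind.precomp (add_right_injective k)).map_fun_eq_infinitePi_map (fun n => hX _),
    hind.map_fun_eq_infinitePi_map hX]
  simp_rw [(hid _).map_eq]

theorem exists_measure_partialSumLeOneAfter_lt_one [IsProbabilityMeasure μ] {X : ℕ → Ω → ℝ}
    (hX : ∀ i, Measurable (X i)) (hind : iIndepFun X μ) (hid : ∀ i, IdentDistrib (X i) (X 0) μ μ)
    (hint : Integrable (X 0) μ) (hdrift : 0 < ∫ ω, X 0 ω ∂μ) :
    ∃ m, 0 < m ∧ μ (partialSumLeOneAfter X m) < 1 := by
  set D := partialSumLeOneAfter X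
  have hD_anti : Antitone D := fun m m' hmm' ω ⟨n, hn, hsum⟩ => ⟨n, hmm'.trans hn, hsum⟩
  have hD_null : μ (⋂ m, D m) = 0 := by
    rw [measure_eq_zero_iff_ae_notMem]
    filter_upwards [strong_law_ae_real X hint (fun i j hij => hind.indepFun hij) hid]
      with ω hω
    have hsum : Tendsto (fun n : ℕ => ∑ i ∈ Finset.range n, X i ω) atTop atTop := by
      refine (hω.pos_mul_atTop hdrift tendsto_natCast_atTop_atTop).congr' ?_
      filter_upwards [eventually_ne_atTop 0] with n hn
      field_simp
    obtain ⟨m, hm⟩ := eventually_atTop.mp (hsum.eventually_gt_atTop 1)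
    simp only [D, partialSumLeOneAfter, Set.mem_iInter, not_forall]
    exact ⟨m, fun ⟨n, hmn, hn⟩ => (hm n hmn).not_ge hn⟩
  have hlim := tendsto_measure_iInter_atTop
    (fun m => (measurableSet_partialSumLeOneAfter hX m).nullMeasurableSet) hD_anti
    ⟨0, measure_ne_top μ _⟩
  rw [hD_null] at hlim
  obtain ⟨m, hm⟩ := eventually_atTop.mp (hlim.eventually_lt_const zero_lt_one)
  exact ⟨m + 1, m.succ_pos, hm (m + 1) m.le_succ⟩

theorem measure_iUnion_nthVisit_add_le {X : ℕ → Ω → ℝ} (hX : ∀ i, Measurable (X i))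
    (hind : iIndepFun X μ) (hid : ∀ i, IdentDistrib (X i) (X 0) μ μ) (x : ℝ) {I : Set ℝ}
    (hI_meas : MeasurableSet I) (hI : ∀ y ∈ I, ∀ z ∈ I, z ≤ y + 1) {m : ℕ} (hm : 0 < m) (i : ℕ) :
    μ (⋃ k, nthVisit X x I (i + m) k)
      ≤ μ (partialSumLeOneAfter X m) * μ (⋃ k, nthVisit X x I i k) := by
  set D := partialSumLeOneAfter (fun j (s : ℕ → ℝ) => s j) m
  have hD : MeasurableSet D := measurableSet_partialSumLeOneAfter measurable_pi_apply m
  set shift : ℕ → Ω → ℕ → ℝ := fun k ω n => X (k + n) ω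
  have hshift_meas (k : ℕ) : Measurable (shift k) := measurable_pi_lambda _ fun n => hX _
  have hshift (k : ℕ) : μ (shift k ⁻¹' D) = μ (partialSumLeOneAfter X m) := by
    rw [← Measure.map_apply (hshift_meas k) hD, hind.map_shift_eq hX hid,
      Measure.map_apply (measurable_pi_lambda _ hX) hD]
    rfl
  have hfactor (k : ℕ) : μ (nthVisit X x I i k ∩ shift k ⁻¹' D)
      = μ (nthVisit X x I i k) * μ (shift k ⁻¹' D) := by
    let 𝓜 : ℕ → MeasurableSpace Ω := fun j => MeasurableSpace.comap (X j) inferInstance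
    have h_le (j : ℕ) : 𝓜 j ≤ ‹_› := (hX j).comap_le
    refine (Indep_iff _ _ μ).mp (indep_iSup_of_disjoint h_le hind.iIndep
      (Set.Iio_disjoint_Ici (le_refl k))) _ _ ?_ ?_
    · exact measurableSet_nthVisit (mΩ := ⨆ j ∈ Set.Iio k, 𝓜 j)
        (fun j hj => (comap_measurable (X j)).mono (le_iSup₂ (f := fun j _ => 𝓜 j) j hj) le_rfl)
        x hI_meas i
    · have : Measurable[⨆ j ∈ Set.Ici k, 𝓜 j] (shift k) :=
        @measurable_pi_lambda _ _ _ (⨆ j ∈ Set.Ici k, 𝓜 j) _ _ fun n =>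
        (comap_measurable (X (k + n))).mono
          (le_iSup₂ (f := fun j _ => 𝓜 j) (k + n) (Nat.le_add_right k n)) le_rfl
      exact this hD
  calc μ (⋃ k, nthVisit X x I (i + m) k)
      ≤ μ (⋃ k, nthVisit X x I i k ∩ shift k ⁻¹' D) :=
        measure_mono (Set.iUnion_subset fun k' => nthVisit_add_subset X x hI hm i k')
    _ ≤ ∑' k, μ (nthVisit X x I i k) * μ (shift k ⁻¹' D) :=
        (measure_iUnion_le _).trans_eq (tsum_congr hfactor)
    _ = μ (partialSumLeOneAfter X m) * μ (⋃ k, nthVisit X x I i k) := by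
        rw [measure_iUnion (pairwise_disjoint_nthVisit X x I i)
          fun k => measurableSet_nthVisit (fun j _ => hX j) x hI_meas i,
          ← ENNReal.tsum_mul_left]
        simp_rw [hshift, mul_comm]

theorem measure_iUnion_nthVisit_le [IsProbabilityMeasure μ] {X : ℕ → Ω → ℝ}
    (hX : ∀ i, Measurable (X i)) (hind : iIndepFun X μ) (hid : ∀ i, IdentDistrib (X i) (X 0) μ μ)
    (x : ℝ) {I : Set ℝ} (hI_meas : MeasurableSet I) (hI : ∀ y ∈ I, ∀ z ∈ I, z ≤ y + 1)
    {m : ℕ} (hm : 0 < m) (n : ℕ) :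
    μ (⋃ k, nthVisit X x I n k)
      ≤ μ (partialSumLeOneAfter X m) ^ (n / m) := by
  suffices h : ∀ q r, μ (⋃ k, nthVisit X x I (r + m * q) k)
      ≤ μ (partialSumLeOneAfter X m) ^ q by
    simpa only [Nat.mod_add_div] using h (n / m) (n % m)
  intro q r
  induction q with
  | zero => simpa using prob_le_one
  | succ q ih =>
    rw [Nat.mul_succ, ← add_assoc, pow_succ']
    exact (measure_iUnion_nthVisit_add_le hX hind hid x hI_meas hI hm _).trans (by gcongr)

/-- At most one term of the sum is nonzero, and `Y k` is independent of the event `E k`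
selecting it. -/
theorem lintegral_tsum_indicator_rpow_eq {𝓜 : ℕ → MeasurableSpace Ω}
    (h_le : ∀ k, 𝓜 k ≤ ‹_›) (hind : iIndep 𝓜 μ) {E : ℕ → Set Ω}
    (hE : ∀ k, MeasurableSet[⨆ j ∈ Set.Iio k, 𝓜 j] (E k)) (hdisj : Pairwise (Disjoint on E))
    {Y : ℕ → Ω → ℝ≥0∞} (hY : ∀ k, Measurable[𝓜 k] (Y k))
    (hid : ∀ k, IdentDistrib (Y k) (Y 0) μ μ) {p : ℝ} (hp : 0 < p) :
    ∫⁻ ω, (∑' k, (E k).indicator (Y k) ω) ^ p ∂μ = (∫⁻ ω, Y 0 ω ^ p ∂μ) * μ (⋃ k, E k) := by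
  have hE_meas (k : ℕ) : MeasurableSet (E k) :=
    iSup₂_le (fun j _ => h_le j) _ (hE k)
  have hterm (k : ℕ) : ∫⁻ ω, (E k).indicator (fun ω => Y k ω ^ p) ω ∂μ
      = (∫⁻ ω, Y 0 ω ^ p ∂μ) * μ (E k) := by
    have hindep : Indep (𝓜 k) (⨆ j ∈ Set.Iio k, 𝓜 j) μ := by
      simpa using indep_iSup_of_disjoint h_le hind (S := {k}) (T := Set.Iio k) (by simp)
    have hmul := lintegral_mul_eq_lintegral_mul_lintegral_of_independent_measurableSpace
      (h_le k) (iSup₂_le fun j _ => h_le j) hindep ((hY k).pow_const p)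
      ((measurable_const (a := (1 : ℝ≥0∞))).indicator (hE k))
    have hY_pow : ∫⁻ ω, Y k ω ^ p ∂μ = ∫⁻ ω, Y 0 ω ^ p ∂μ :=
      ((hid k).comp (measurable_id.pow_const p)).lintegral_eq
    have hprod (ω : Ω) : (E k).indicator (fun ω => Y k ω ^ p) ω
        = Y k ω ^ p * (E k).indicator (fun _ => 1) ω := by
      by_cases h : ω ∈ E k <;> simp [h]
    rw [lintegral_congr hprod, hmul, hY_pow,
      lintegral_indicator_const (hE_meas k), one_mul]
  simp_rw [tsum_indicator_rpow_of_pairwise_disjoint hdisj _ hp]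
  rw [lintegral_tsum fun k => (((hY k).mono (h_le k) le_rfl).pow_const p).aemeasurable.indicator
      (hE_meas k), measure_iUnion hdisj hE_meas, ← ENNReal.tsum_mul_left]
  exact tsum_congr hterm

end Probability

section DiscountedSum

variable {μ : Measure Ω} [IsProbabilityMeasure μ] {X A : ℕ → Ω → ℝ}

theorem lintegral_tsum_indicator_nthVisit_rpow_le (hX : ∀ i, Measurable (X i))
    (hA : ∀ i, Measurable (A i)) (hindep : iIndepFun (fun i ω => (X i ω, A i ω)) μ)
    (hident : ∀ i, IdentDistrib (fun ω => (X i ω, A i ω)) (fun ω => (X 0 ω, A 0 ω)) μ μ)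
    {p : ℝ} (hp : 0 < p) (x : ℝ) {I : Set ℝ} (hI_meas : MeasurableSet I)
    (hI : ∀ y ∈ I, ∀ z ∈ I, z ≤ y + 1) {m : ℕ} (hm : 0 < m) (n : ℕ) :
    ∫⁻ ω, (∑' k, (nthVisit X x I n k).indicator (fun ω => ENNReal.ofReal (A k ω)) ω) ^ p ∂μ
      ≤ (∫⁻ ω, ENNReal.ofReal (A 0 ω) ^ p ∂μ)
        * μ (partialSumLeOneAfter X m) ^ (n / m) := by
  let 𝓜 : ℕ → MeasurableSpace Ω := fun j =>
    MeasurableSpace.comap (fun ω => (X j ω, A j ω)) inferInstance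
  have hX𝓜 (j : ℕ) : Measurable[𝓜 j] (X j) := measurable_fst.comp (comap_measurable _)
  have hA𝓜 (j : ℕ) : Measurable[𝓜 j] (A j) := measurable_snd.comp (comap_measurable _)
  have hpast (k : ℕ) : MeasurableSet[⨆ j ∈ Set.Iio k, 𝓜 j] (nthVisit X x I n k) :=
    measurableSet_nthVisit
      (fun j hj => (hX𝓜 j).mono (le_iSup₂ (f := fun j _ => 𝓜 j) j hj) le_rfl) x hI_meas n
  rw [lintegral_tsum_indicator_rpow_eq (fun j => ((hX j).prodMk (hA j)).comap_le) hindep.iIndep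
    hpast (pairwise_disjoint_nthVisit X x I n) (fun k => (hA𝓜 k).ennreal_ofReal)
    (fun k => ((hident k).comp measurable_snd).comp ENNReal.measurable_ofReal) hp]
  gcongr
  exact measure_iUnion_nthVisit_le hX (hindep.comp (fun _ => Prod.fst) fun _ => measurable_fst)
    (fun i => (hident i).comp measurable_fst) x hI_meas hI hm n

theorem lintegral_discounted_sum_rpow_le (hX : ∀ i, Measurable (X i))
    (hA : ∀ i, Measurable (A i)) (hindep : iIndepFun (fun i ω => (X i ω, A i ω)) μ)
    (hident : ∀ i, IdentDistrib (fun ω => (X i ω, A i ω)) (fun ω => (X 0 ω, A 0 ω)) μ μ)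
    {p : ℝ} (hp : 1 ≤ p) {κ : ℝ} (hκ : 0 ≤ κ) {m : ℕ} (hm : 0 < m) (x t : ℝ) :
    (∫⁻ ω, (∑' k : ℕ, if (k : ℕ∞) < hitAbove X x t ω
        then ENNReal.ofReal (A k ω * Real.exp (κ * (walk X x k ω - t))) else 0) ^ p ∂μ) ^ p⁻¹
      ≤ (1 - ENNReal.ofReal (Real.exp (-κ)))⁻¹ * ((∫⁻ ω, ENNReal.ofReal (A 0 ω) ^ p ∂μ) ^ p⁻¹
        * (m * (1 - μ (partialSumLeOneAfter X m) ^ p⁻¹)⁻¹)) := by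
  have hp0 : 0 < p := zero_lt_one.trans_le hp
  have : NeZero m := ⟨hm.ne'⟩
  set c := ENNReal.ofReal (Real.exp (-κ))
  set q := μ (partialSumLeOneAfter X m)
  set Z : ℕ × ℕ → Ω → ℝ≥0∞ := fun j ω =>
    ∑' k, (nthVisit X x (Set.Ioc (t - j.1 - 1) (t - j.1)) j.2 k).indicator
      (fun ω => ENNReal.ofReal (A k ω)) ω
  have hZ_meas (j : ℕ × ℕ) : Measurable (Z j) := Measurable.tsum fun k =>
    (hA k).ennreal_ofReal.indicator (measurableSet_nthVisit (fun i _ => hX i) x measurableSet_Ioc _)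
  have hband (j : ℕ) : ∀ y ∈ Set.Ioc (t - j - 1) (t - j), ∀ z ∈ Set.Ioc (t - j - 1) (t - j),
      z ≤ y + 1 := fun y hy z hz => by linarith [hy.1, hz.2]
  have hterm (j : ℕ × ℕ) : (∫⁻ ω, (c ^ j.1 * Z j ω) ^ p ∂μ) ^ p⁻¹
      ≤ c ^ j.1 * ((∫⁻ ω, ENNReal.ofReal (A 0 ω) ^ p ∂μ) ^ p⁻¹ * (q ^ p⁻¹) ^ (j.2 / m)) := by
    simp_rw [ENNReal.mul_rpow_of_nonneg _ _ hp0.le]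
    rw [lintegral_const_mul _ ((hZ_meas j).pow_const p),
      ENNReal.mul_rpow_of_nonneg _ _ (inv_nonneg.mpr hp0.le), ENNReal.rpow_rpow_inv hp0.ne']
    gcongr
    calc (∫⁻ ω, Z j ω ^ p ∂μ) ^ p⁻¹
        ≤ ((∫⁻ ω, ENNReal.ofReal (A 0 ω) ^ p ∂μ) * q ^ (j.2 / m)) ^ p⁻¹ := by
          gcongr
          exact lintegral_tsum_indicator_nthVisit_rpow_le hX hA hindep hident hp0 x
            measurableSet_Ioc (hband j.1) hm j.2
      _ = _ := by
          rw [ENNReal.mul_rpow_of_nonneg _ _ (inv_nonneg.mpr hp0.le), ← ENNReal.rpow_natCast_mul,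
            mul_comm (_ : ℝ), ENNReal.rpow_mul_natCast]
  calc _ ≤ (∫⁻ ω, (∑' j, c ^ j.1 * Z j ω) ^ p ∂μ) ^ p⁻¹ := by
        gcongr with ω
        exact tsum_ite_lt_hitAbove_le X A x t hκ ω
    _ ≤ ∑' j, (∫⁻ ω, (c ^ j.1 * Z j ω) ^ p ∂μ) ^ p⁻¹ :=
        ENNReal.lintegral_Lp_tsum_le (fun j => ((hZ_meas j).const_mul _).aemeasurable) hp
    _ ≤ _ := ENNReal.tsum_le_tsum hterm
    _ = _ := by
        rw [ENNReal.tsum_prod']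
        simp_rw [ENNReal.tsum_mul_left, ENNReal.tsum_pow_div]
        rw [ENNReal.tsum_mul_right, ENNReal.tsum_geometric]

end DiscountedSum

theorem positive_drift_exponential_sum_moment_bound_general
    (μ : Measure Ω) [IsProbabilityMeasure μ]
    (X A : ℕ → Ω → ℝ)
    (hmeasX : ∀ i, Measurable (X i)) (hmeasA : ∀ i, Measurable (A i))
    (hindep : iIndepFun (fun i ω => (X i ω, A i ω)) μ)
    (hident : ∀ i, IdentDistrib (fun ω => (X i ω, A i ω)) (fun ω => (X 0 ω, A 0 ω)) μ μ)
    (hdrift : 0 < ∫ ω, X 0 ω ∂μ)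
    (hmom2 : Integrable (fun ω => (X 0 ω) ^ 2) μ)
    (p : ℝ) (hp : 1 ≤ p)
    (hAp : ∫⁻ ω, ENNReal.ofReal (A 0 ω) ^ p ∂μ < ⊤)
    (κ : ℝ) (hκ : 0 < κ) :
    ∃ c : ℝ, 0 < c ∧ ∀ t : ℝ, 0 < t → ∀ x : ℝ, x ≤ t →
      ∫⁻ ω, (∑' k : ℕ, if (k : ℕ∞) < hitAbove X x t ω
          then ENNReal.ofReal (A k ω * Real.exp (κ * (walk X x k ω - t))) else 0) ^ p ∂μ
        ≤ ENNReal.ofReal c := by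
  have hp0 : 0 < p := zero_lt_one.trans_le hp
  have hint : Integrable (X 0) μ :=
    ((memLp_two_iff_integrable_sq (hmeasX 0).aestronglyMeasurable).mpr hmom2).integrable
      one_le_two
  obtain ⟨m, hm, hq⟩ := exists_measure_partialSumLeOneAfter_lt_one hmeasX
    (hindep.comp (fun _ => Prod.fst) fun _ => measurable_fst)
    (fun i => (hident i).comp measurable_fst) hint hdrift
  set C := (1 - ENNReal.ofReal (Real.exp (-κ)))⁻¹ * ((∫⁻ ω, ENNReal.ofReal (A 0 ω) ^ p ∂μ) ^ p⁻¹
    * (m * (1 - μ (partialSumLeOneAfter X m) ^ p⁻¹)⁻¹))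
  have hC : C ^ p ≠ ⊤ := by
    refine ENNReal.rpow_ne_top_of_nonneg hp0.le (ENNReal.mul_ne_top ?_ (ENNReal.mul_ne_top
      (ENNReal.rpow_ne_top_of_nonneg (inv_nonneg.mpr hp0.le) hAp.ne)
      (ENNReal.mul_ne_top (ENNReal.natCast_ne_top m) ?_)))
    · exact ENNReal.inv_ne_top.mpr (tsub_pos_of_lt
        (ENNReal.ofReal_lt_one.mpr (Real.exp_lt_one_iff.mpr (neg_neg_of_pos hκ)))).ne'
    · exact ENNReal.inv_ne_top.mpr (tsub_pos_of_lt (ENNReal.rpow_lt_one hq (inv_pos.mpr hp0))).ne'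
  refine ⟨(C ^ p).toReal + 1, by positivity, fun t _ x _ => ?_⟩
  calc _ ≤ C ^ p := (ENNReal.rpow_inv_le_iff hp0).mp
        (lintegral_discounted_sum_rpow_le hmeasX hmeasA hindep hident hp hκ.le hm x t)
    _ ≤ ENNReal.ofReal ((C ^ p).toReal + 1) := by
        rw [← ENNReal.ofReal_toReal hC]
        exact ENNReal.ofReal_le_ofReal (by simp)

/-- Lemma `l:positivewalk`. Let `(S_n)` be a random walk with positive drift
`E[S_1] > 0` and `E[S_1^2] < ∞`, and let `(a_i, S_i - S_{i-1})_{i ≥ 1}` be i.i.d. pairs with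
`a_i ≥ 0` a.s. (here `A k` is `a_{k+1}`, paired with the `(k+1)`-st increment `X k`). For every
`p ≥ 1` with `E[a_1^p] < ∞` and every `κ > 0` there is a constant `c > 0` such that
`E_x[(∑_{k=0}^{τ_t^+ - 1} a_{k+1} e^{κ(S_k - t)})^p] ≤ c` for all `t > 0` and all `x ≤ t`. -/
theorem positive_drift_exponential_sum_moment_bound
    (μ : Measure Ω) [IsProbabilityMeasure μ]
    (X A : ℕ → Ω → ℝ)
    (hmeasX : ∀ i, Measurable (X i)) (hmeasA : ∀ i, Measurable (A i))
    (hindep : iIndepFun (fun i ω => (X i ω, A i ω)) μ)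
    (hident : ∀ i, IdentDistrib (fun ω => (X i ω, A i ω)) (fun ω => (X 0 ω, A 0 ω)) μ μ)
    (hA : ∀ i, ∀ᵐ ω ∂μ, 0 ≤ A i ω)
    (hdrift : 0 < ∫ ω, X 0 ω ∂μ)
    (hmom2 : Integrable (fun ω => (X 0 ω) ^ 2) μ)
    (p : ℝ) (hp : 1 ≤ p)
    (hAp : ∫⁻ ω, ENNReal.ofReal (A 0 ω) ^ p ∂μ < ⊤)
    (κ : ℝ) (hκ : 0 < κ) :
    ∃ c : ℝ, 0 < c ∧ ∀ t : ℝ, 0 < t → ∀ x : ℝ, x ≤ t →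
      ∫⁻ ω, (∑' k : ℕ, if (k : ℕ∞) < hitAbove X x t ω
          then ENNReal.ofReal (A k ω * Real.exp (κ * (walk X x k ω - t))) else 0) ^ p ∂μ
        ≤ ENNReal.ofReal c :=
  positive_drift_exponential_sum_moment_bound_general μ X A hmeasX hmeasA hindep hident hdrift hmom2
    p hp hAp κ hκ
end

section
/- Let (S_n) be a centered real random walk with Var(S_1) > 0 and E[e^{u S_1}] < ∞ for all u ∈ (−(1+η), η) for some η > 0. Then there exists a constant c > 1 such that for all L ≥ 1 and all 0 ≤ a ≤ L: E_a[ e^{S_{τ_0^- − 1} − S_{τ_0^-}} ] ≤ c. -/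
/-! On `{τ_0^- = n + 1}` the last jump is `-X n` and `S_{n+1} < 0`, so
`e^{-X n} ≤ e^{-δ S_n} e^{-(1+δ) X n}`. As `X n` is independent of the walk stopped at time `n`,
the expectation is at most `1 + E[e^{-(1+δ) X}] · G` with `G = ∑ₙ E_a[e^{-δ S_n}; n < τ_0^-]`.
Because the walk is centred and non-degenerate, strict Jensen gives `E[e^{-δ X}] > 1`; this
makes `A - B e^{-δ y}` a supersolution on `[0, ∞)` for suitable `A, B` (the moment of order
`2δ` controls the undershoot below `0`), and telescoping bounds `G` by `A`, uniformly in `a`. -/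

open MeasureTheory ProbabilityTheory Filter Topology Real
open scoped ENNReal NNReal

variable {Ω : Type*} [MeasurableSpace Ω]

omit [MeasurableSpace Ω] in
@[simp]
lemma walk_zero (X : ℕ → Ω → ℝ) (x : ℝ) (ω : Ω) : walk X x 0 ω = x := by
  simp [walk]

omit [MeasurableSpace Ω] in
lemma walk_succ (X : ℕ → Ω → ℝ) (x : ℝ) (n : ℕ) (ω : Ω) :
    walk X x (n + 1) ω = walk X x n ω + X n ω := by
  simp [walk, Finset.sum_range_succ, add_assoc]

omit [MeasurableSpace Ω] in
lemma walk_lt_and_le_of_hitBelow_eq {X : ℕ → Ω → ℝ} {x a : ℝ} {ω : Ω} {m : ℕ}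
    (h : hitBelow X x a ω = m) : walk X x m ω < a ∧ ∀ k < m, a ≤ walk X x k ω := by
  set s : Set ℕ := {n | walk X x n ω < a}
  have hs : s.Nonempty := by
    by_contra hs
    have htop : hitBelow X x a ω = ⊤ := by
      simp only [hitBelow, iInf_eq_top, ENat.natCast_ne_top, imp_false]
      exact fun n hn => hs ⟨n, hn⟩
    exact ENat.natCast_ne_top m (h ▸ htop)
  have hm : sInf s = m := by
    have : ((sInf s : ℕ) : ℕ∞) = hitBelow X x a ω := ENat.natCast_sInf hs
    exact_mod_cast this.trans h
  exact ⟨hm ▸ Nat.sInf_mem hs, fun k hk => not_lt.mp (Nat.notMem_of_lt_sInf (hm ▸ hk))⟩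

noncomputable def stopStep (y x : ℝ) : ℝ := if y < 0 then y else y + x

lemma measurable_stopStep : Measurable fun p : ℝ × ℝ => stopStep p.1 p.2 :=
  Measurable.ite (measurableSet_lt measurable_fst measurable_const) measurable_fst
    (measurable_fst.add measurable_snd)

/-- `S_{n ∧ τ_0^-}` for the walk started at `a`. -/
noncomputable def stoppedWalk (X : ℕ → Ω → ℝ) (a : ℝ) : ℕ → Ω → ℝ
  | 0 => fun _ => a
  | n + 1 => fun ω => stopStep (stoppedWalk X a n ω) (X n ω)

omit [MeasurableSpace Ω] in
lemma stoppedWalk_eq_walk {X : ℕ → Ω → ℝ} {a : ℝ} {ω : Ω} {n : ℕ}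
    (h : ∀ k < n, 0 ≤ walk X a k ω) : stoppedWalk X a n ω = walk X a n ω := by
  induction n with
  | zero => simp [stoppedWalk]
  | succ n ih =>
    have ih := ih fun k hk => h k (hk.trans n.lt_succ_self)
    simp only [stoppedWalk, stopStep, ih, walk_succ, if_neg (not_lt.mpr (h n n.lt_succ_self))]

omit [MeasurableSpace Ω] in
lemma measurable_stoppedWalk_past (X : ℕ → Ω → ℝ) (a : ℝ) (n : ℕ) :
    Measurable[⨆ i ∈ Set.Iio n, MeasurableSpace.comap (X i) inferInstance]
      (stoppedWalk X a n) := by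
  induction n with
  | zero => exact measurable_const
  | succ n ih =>
    refine measurable_stopStep.comp (Measurable.prodMk ?_ ?_)
    · exact ih.mono (biSup_mono fun i hi => (Set.mem_Iio.mp hi).trans n.lt_succ_self) le_rfl
    · exact (comap_measurable (X n)).mono (le_iSup₂ (f := fun i (_ : i ∈ Set.Iio (n + 1)) =>
        MeasurableSpace.comap (X i) inferInstance) n n.lt_succ_self) le_rfl

variable {μ : Measure Ω} {X : ℕ → Ω → ℝ}

lemma measurable_stoppedWalk (hmeas : ∀ i, Measurable (X i)) (a : ℝ) (n : ℕ) :
    Measurable (stoppedWalk X a n) :=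
  (measurable_stoppedWalk_past X a n).mono (iSup₂_le fun i _ => (hmeas i).comap_le) le_rfl

lemma indepFun_stoppedWalk (hmeas : ∀ i, Measurable (X i)) (hindep : iIndepFun X μ)
    (a : ℝ) (n : ℕ) : IndepFun (stoppedWalk X a n) (X n) μ := by
  rw [IndepFun_iff_Indep]
  have h := indep_iSup_of_disjoint (fun i => (hmeas i).comap_le)
    ((iIndepFun_iff_iIndep _ X μ).mp hindep)
    (Set.disjoint_singleton_right.mpr (lt_irrefl n) : Disjoint (Set.Iio n) {n})
  refine indep_of_indep_of_le h ?_ ?_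
  · exact (measurable_stoppedWalk_past X a n).comap_le
  · exact le_iSup₂ (f := fun i (_ : i ∈ ({n} : Set ℕ)) =>
      MeasurableSpace.comap (X i) inferInstance) n rfl

lemma ProbabilityTheory.IndepFun.lintegral_comp_eq {β γ : Type*} [MeasurableSpace β]
    [MeasurableSpace γ] [IsFiniteMeasure μ] {Y : Ω → β} {Z : Ω → γ} (h : IndepFun Y Z μ)
    (hY : Measurable Y) (hZ : Measurable Z) {Θ : β × γ → ℝ≥0∞} (hΘ : Measurable Θ) :
    ∫⁻ ω, Θ (Y ω, Z ω) ∂μ = ∫⁻ ω, ∫⁻ ω', Θ (Y ω, Z ω') ∂μ ∂μ := by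
  have hmap := (indepFun_iff_map_prod_eq_prod_map_map hY.aemeasurable hZ.aemeasurable).mp h
  calc ∫⁻ ω, Θ (Y ω, Z ω) ∂μ = ∫⁻ p, Θ p ∂((μ.map Y).prod (μ.map Z)) := by
        rw [← hmap, lintegral_map hΘ (hY.prodMk hZ)]
    _ = ∫⁻ y, ∫⁻ z, Θ (y, z) ∂(μ.map Z) ∂(μ.map Y) := lintegral_prod Θ hΘ.aemeasurable
    _ = ∫⁻ ω, ∫⁻ ω', Θ (Y ω, Z ω') ∂μ ∂μ := by
        rw [lintegral_map hΘ.lintegral_prod_right' hY]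
        exact lintegral_congr fun ω => lintegral_map (hΘ.comp measurable_prodMk_left) hZ

lemma ENNReal.tsum_le_of_add_le {u w : ℕ → ℝ≥0∞} (h : ∀ n, w (n + 1) + u n ≤ w n) :
    ∑' n, u n ≤ w 0 := by
  have hpartial : ∀ N, ∑ n ∈ Finset.range N, u n + w N ≤ w 0 := by
    intro N
    induction N with
    | zero => simp
    | succ N ih =>
      calc ∑ n ∈ Finset.range (N + 1), u n + w (N + 1)
          = ∑ n ∈ Finset.range N, u n + (w (N + 1) + u N) := by
            rw [Finset.sum_range_succ]; ring
        _ ≤ w 0 := (add_le_add_right (h N) _).trans ih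
  exact ENNReal.tsum_le_of_sum_range_le fun N => le_self_add.trans (hpartial N)

section GreenFunction

variable [IsProbabilityMeasure μ] (hmeas : ∀ i, Measurable (X i)) (hindep : iIndepFun X μ)
  (hident : ∀ i, IdentDistrib (X i) (X 0) μ μ)
  {f g : ℝ → ℝ≥0∞} (hf : Measurable f) (hg : Measurable g) (hf_neg : ∀ y < 0, f y = 0)
  (hsuper : ∀ b, 0 ≤ b → f b + ∫⁻ ω, g (b + X 0 ω) ∂μ ≤ g b)
include hmeas hindep hident hf hg hf_neg hsuper

lemma lintegral_stoppedWalk_succ_add_le (a : ℝ) (n : ℕ) :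
    ∫⁻ ω, g (stoppedWalk X a (n + 1) ω) ∂μ + ∫⁻ ω, f (stoppedWalk X a n ω) ∂μ
      ≤ ∫⁻ ω, g (stoppedWalk X a n ω) ∂μ := by
  have hY := measurable_stoppedWalk hmeas a n
  have hΘ : Measurable fun p : ℝ × ℝ => g (stopStep p.1 p.2) + f p.1 :=
    (hg.comp measurable_stopStep).add (hf.comp measurable_fst)
  have hinner : ∀ y, ∫⁻ ω, (g (stopStep y (X n ω)) + f y) ∂μ ≤ g y := by
    intro y
    rcases lt_or_ge y 0 with hy | hy
    · simp [stopStep, hy, hf_neg y hy]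
    · have hlaw : ∫⁻ ω, g (y + X n ω) ∂μ = ∫⁻ ω, g (y + X 0 ω) ∂μ :=
        ((hident n).comp (hg.comp (measurable_const_add y))).lintegral_eq
      simp only [stopStep, if_neg (not_lt.mpr hy)]
      rw [lintegral_add_right _ measurable_const, lintegral_const, measure_univ, mul_one, hlaw,
        add_comm]
      exact hsuper y hy
  calc ∫⁻ ω, g (stoppedWalk X a (n + 1) ω) ∂μ + ∫⁻ ω, f (stoppedWalk X a n ω) ∂μ
      = ∫⁻ ω, (g (stopStep (stoppedWalk X a n ω) (X n ω)) + f (stoppedWalk X a n ω)) ∂μ :=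
        (lintegral_add_left ((hg.comp (measurable_stoppedWalk hmeas a (n + 1)))) _).symm
    _ = ∫⁻ ω, ∫⁻ ω', (g (stopStep (stoppedWalk X a n ω) (X n ω')) + f (stoppedWalk X a n ω))
          ∂μ ∂μ :=
        (indepFun_stoppedWalk hmeas hindep a n).lintegral_comp_eq hY (hmeas n) hΘ
    _ ≤ ∫⁻ ω, g (stoppedWalk X a n ω) ∂μ := lintegral_mono fun ω => hinner _

lemma tsum_lintegral_stoppedWalk_le (a : ℝ) :
    ∑' n, ∫⁻ ω, f (stoppedWalk X a n ω) ∂μ ≤ g a := by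
  simpa [stoppedWalk] using ENNReal.tsum_le_of_add_le
    (lintegral_stoppedWalk_succ_add_le hmeas hindep hident hf hg hf_neg hsuper a)

end GreenFunction

lemma one_lt_integral_exp_neg_mul [IsProbabilityMeasure μ] {Y : Ω → ℝ} (hY : Integrable Y μ)
    (hcent : ∫ ω, Y ω ∂μ = 0) (hY0 : ¬ Y =ᵐ[μ] 0) {δ : ℝ} (hδ : δ ≠ 0)
    (hexp : Integrable (fun ω => exp (-δ * Y ω)) μ) :
    1 < ∫ ω, exp (-δ * Y ω) ∂μ := by
  have h := strictConvexOn_exp.ae_eq_const_or_map_average_lt continuous_exp.continuousOn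
    isClosed_univ (ae_of_all _ fun _ => Set.mem_univ _) (hY.const_mul (-δ)) hexp
  simp only [average_eq_integral, integral_const_mul, hcent, mul_zero, exp_zero] at h
  refine h.resolve_left fun h0 => hY0 ?_
  filter_upwards [h0] with ω hω
  simpa [hδ] using hω

lemma setIntegral_le_mul_measureReal_add [IsFiniteMeasure μ] {Z : Ω → ℝ} (hZ : Integrable Z μ)
    (hZ2 : Integrable (fun ω => Z ω ^ 2) μ) (s : Set Ω) {T : ℝ} (hT : 0 < T) :
    ∫ ω in s, Z ω ∂μ ≤ T * μ.real s + T⁻¹ * ∫ ω, Z ω ^ 2 ∂μ := by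
  have hpt : ∀ ω, Z ω ≤ T + T⁻¹ * Z ω ^ 2 := fun ω => by
    rw [← mul_le_mul_iff_right₀ hT, mul_add, ← mul_assoc, mul_inv_cancel₀ hT.ne', one_mul]
    nlinarith [sq_nonneg (Z ω - T)]
  calc ∫ ω in s, Z ω ∂μ ≤ ∫ ω in s, (T + T⁻¹ * Z ω ^ 2) ∂μ :=
        setIntegral_mono hZ.integrableOn ((integrable_const T).add (hZ2.const_mul _)).integrableOn
          hpt
    _ = T * μ.real s + T⁻¹ * ∫ ω in s, Z ω ^ 2 ∂μ := by
        rw [integral_add (integrable_const T) (hZ2.const_mul _).integrableOn, setIntegral_const,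
          integral_const_mul, smul_eq_mul, mul_comm]
    _ ≤ T * μ.real s + T⁻¹ * ∫ ω, Z ω ^ 2 ∂μ := by
        have := setIntegral_le_integral (s := s) hZ2 (ae_of_all _ fun ω => sq_nonneg (Z ω))
        gcongr

/-- For `Z = e^{-δ Y}` and `E = e^{-δ b}`, this is the supersolution inequality for
`A - B e^{-δ y}` at `b`, with `t` the event `{b + Y ≥ 0}`. -/
lemma exists_supersolution_of_one_lt_integral [IsProbabilityMeasure μ] {Z : Ω → ℝ}
    (hZ : Integrable Z μ) (hZ2 : Integrable (fun ω => Z ω ^ 2) μ) (hM : 1 < ∫ ω, Z ω ∂μ) :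
    ∃ A B : ℝ, 0 < B ∧ B ≤ A ∧ ∀ t : Set Ω, MeasurableSet t → ∀ E : ℝ, 0 ≤ E → E ≤ 1 →
      E + ∫ ω in t, (A - B * (E * Z ω)) ∂μ ≤ A - B * E := by
  obtain ⟨κ, hκdef⟩ : ∃ κ, κ = ∫ ω, Z ω ∂μ - 1 := ⟨_, rfl⟩
  have hκ : 0 < κ := by linarith
  obtain ⟨T, hT1, hTκ⟩ : ∃ T, 1 ≤ T ∧ T⁻¹ * ∫ ω, Z ω ^ 2 ∂μ ≤ κ / 4 := by
    refine ⟨max 1 (4 * (∫ ω, Z ω ^ 2 ∂μ) / κ), le_max_left _ _, ?_⟩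
    rw [inv_mul_le_iff₀ (zero_lt_one.trans_le (le_max_left _ _))]
    have := le_max_right 1 (4 * (∫ ω, Z ω ^ 2 ∂μ) / κ)
    rw [div_le_iff₀ hκ] at this
    linarith
  obtain ⟨B, hB0, hB⟩ : ∃ B, 0 < B ∧ B * κ = 2 :=
    ⟨2 / κ, by positivity, div_mul_cancel₀ 2 hκ.ne'⟩
  refine ⟨B * T, B, hB0, le_mul_of_one_le_right hB0.le hT1, fun t ht E hE0 hE1 => ?_⟩
  have hint : ∫ ω in t, (B * T - B * (E * Z ω)) ∂μ
      = B * T * (1 - μ.real tᶜ) - B * E * (κ + 1 - ∫ ω in tᶜ, Z ω ∂μ) := by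
    have hsplit := integral_add_compl ht hZ
    rw [integral_sub (integrable_const _) ((hZ.const_mul E).const_mul B).integrableOn,
      setIntegral_const, smul_eq_mul, integral_const_mul, integral_const_mul,
      probReal_compl_eq_one_sub ht]
    linear_combination (-(B * E)) * hsplit + (B * E) * hκdef
  rw [hint]
  have htail := setIntegral_le_mul_measureReal_add hZ hZ2 tᶜ (zero_lt_one.trans_le hT1)
  have hBEJ : B * E * ∫ ω in tᶜ, Z ω ∂μ ≤ E * (B * T * μ.real tᶜ) + E / 2 := by
    have := mul_le_mul_of_nonneg_left (htail.trans (add_le_add_right hTκ _))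
      (by positivity : 0 ≤ B * E)
    nlinarith
  have hqE : E * (B * T * μ.real tᶜ) ≤ B * T * μ.real tᶜ :=
    mul_le_of_le_one_left (by positivity) hE1
  linear_combination hBEJ + hqE + (1 / 2 : ℝ) * hE0 - E * hB

noncomputable def barrier (δ A B : ℝ) : ℝ → ℝ :=
  (Set.Ici 0).indicator fun y => A - B * exp (-δ * y)

lemma barrier_nonneg {δ A B : ℝ} (hδ : 0 ≤ δ) (hB : 0 ≤ B) (hBA : B ≤ A) (y : ℝ) :
    0 ≤ barrier δ A B y := by
  refine Set.indicator_nonneg (fun y (hy : 0 ≤ y) => ?_) y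
  have : exp (-δ * y) ≤ 1 := exp_le_one_iff.mpr (by nlinarith)
  nlinarith

lemma barrier_le {δ A B : ℝ} (hB : 0 ≤ B) (hA : 0 ≤ A) (y : ℝ) : barrier δ A B y ≤ A :=
  Set.indicator_le' (fun y _ => sub_le_self A (by positivity)) (fun _ _ => hA) y

lemma measurable_barrier (δ A B : ℝ) : Measurable (barrier δ A B) :=
  (measurable_const.sub (measurable_const.mul (by fun_prop))).indicator measurableSet_Ici

lemma exists_barrier [IsProbabilityMeasure μ] {Y : Ω → ℝ} (hYm : Measurable Y) {δ : ℝ}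
    (hδ : 0 ≤ δ) (hZ : Integrable (fun ω => exp (-δ * Y ω)) μ)
    (hZ2 : Integrable (fun ω => exp (-(2 * δ) * Y ω)) μ) (hM : 1 < ∫ ω, exp (-δ * Y ω) ∂μ) :
    ∃ A B : ℝ, 0 < B ∧ B ≤ A ∧ ∀ b : ℝ, 0 ≤ b →
      exp (-δ * b) + ∫ ω, barrier δ A B (b + Y ω) ∂μ ≤ barrier δ A B b := by
  have hsq : (fun ω => exp (-δ * Y ω) ^ 2) = fun ω => exp (-(2 * δ) * Y ω) := by
    ext ω; rw [← exp_nat_mul]; ring_nf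
  obtain ⟨A, B, hB, hBA, hsuper⟩ := exists_supersolution_of_one_lt_integral
    hZ (hsq ▸ hZ2) hM
  refine ⟨A, B, hB, hBA, fun b hb => ?_⟩
  have ht : MeasurableSet {ω | 0 ≤ b + Y ω} := measurableSet_le measurable_const (by fun_prop)
  have hshift : (fun ω => barrier δ A B (b + Y ω))
      = {ω | 0 ≤ b + Y ω}.indicator fun ω => A - B * (exp (-δ * b) * exp (-δ * Y ω)) := by
    ext ω
    simp only [barrier, Set.indicator_apply, Set.mem_Ici, Set.mem_ofPred_eq, mul_add, exp_add]
  rw [hshift, integral_indicator ht, barrier, Set.indicator_of_mem (Set.mem_Ici.mpr hb)]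
  exact hsuper _ ht _ (exp_pos _).le (exp_le_one_iff.mpr (by nlinarith))

lemma ofReal_add_lintegral_barrier_le [IsFiniteMeasure μ] {Y : Ω → ℝ} (hYm : Measurable Y)
    {δ A B b : ℝ} (hδ : 0 ≤ δ) (hB : 0 ≤ B) (hBA : B ≤ A)
    (hsuper : exp (-δ * b) + ∫ ω, barrier δ A B (b + Y ω) ∂μ ≤ barrier δ A B b) :
    ENNReal.ofReal (exp (-δ * b)) + ∫⁻ ω, ENNReal.ofReal (barrier δ A B (b + Y ω)) ∂μ
      ≤ ENNReal.ofReal (barrier δ A B b) := by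
  have hnonneg := barrier_nonneg hδ hB hBA
  have hint : Integrable (fun ω => barrier δ A B (b + Y ω)) μ :=
    Integrable.of_bound ((measurable_barrier δ A B).comp (measurable_const_add b |>.comp hYm)
      ).aestronglyMeasurable A (ae_of_all _ fun ω => by
        rw [norm_of_nonneg (hnonneg _)]; exact barrier_le hB (hB.trans hBA) _)
  rw [← ofReal_integral_eq_lintegral_ofReal hint (ae_of_all _ fun ω => hnonneg _),
    ← ENNReal.ofReal_add (exp_pos _).le (integral_nonneg fun ω => hnonneg _)]
  exact ENNReal.ofReal_le_ofReal hsuper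

noncomputable def killedExp (δ : ℝ) : ℝ → ℝ :=
  (Set.Ici 0).indicator fun y => exp (-δ * y)

lemma killedExp_of_nonneg (δ : ℝ) {y : ℝ} (hy : 0 ≤ y) : killedExp δ y = exp (-δ * y) :=
  Set.indicator_of_mem (Set.mem_Ici.mpr hy) _

lemma killedExp_of_neg (δ : ℝ) {y : ℝ} (hy : y < 0) : killedExp δ y = 0 :=
  Set.indicator_of_notMem (not_le.mpr hy : y ∉ Set.Ici 0) _

lemma measurable_killedExp (δ : ℝ) : Measurable (killedExp δ) :=
  (measurable_const.mul measurable_id).exp.indicator measurableSet_Ici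

omit [MeasurableSpace Ω] in
/-- On `{τ_0^- = ∞}` the left side is the junk value `e^{S_0 - S_0} = 1`. -/
lemma ofReal_exp_lastJump_le (X : ℕ → Ω → ℝ) {a δ : ℝ} (ha : 0 ≤ a) (hδ : 0 ≤ δ) (ω : Ω) :
    ENNReal.ofReal (exp (walk X a ((hitBelow X a 0 ω).toNat - 1) ω - stopBelow X a 0 ω))
      ≤ 1 + ∑' n, ENNReal.ofReal (killedExp δ (stoppedWalk X a n ω))
          * ENNReal.ofReal (exp (-(1 + δ) * X n ω)) := by
  unfold stopBelow
  cases h : hitBelow X a 0 ω using ENat.recTopCoe with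
  | top => simp
  | coe m =>
    obtain ⟨hm, hbefore⟩ := walk_lt_and_le_of_hitBelow_eq h
    obtain ⟨n, rfl⟩ : ∃ n, m = n + 1 :=
      Nat.exists_eq_succ_of_ne_zero (by rintro rfl; simp at hm; linarith)
    have hSn : 0 ≤ walk X a n ω := hbefore n n.lt_succ_self
    have hYn : stoppedWalk X a n ω = walk X a n ω :=
      stoppedWalk_eq_walk fun k hk => hbefore k (hk.trans n.lt_succ_self)
    refine le_add_left (le_trans ?_ (ENNReal.le_tsum n))
    rw [hYn, killedExp_of_nonneg δ hSn,
      ← ENNReal.ofReal_mul (exp_pos _).le, ← exp_add, ENat.toNat_natCast, Nat.add_sub_cancel]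
    refine ENNReal.ofReal_le_ofReal (exp_le_exp.mpr ?_)
    rw [walk_succ] at hm ⊢
    nlinarith

lemma lintegral_tsum_stoppedWalk_mul (hmeas : ∀ i, Measurable (X i)) (hindep : iIndepFun X μ)
    (hident : ∀ i, IdentDistrib (X i) (X 0) μ μ) (a : ℝ) {f h : ℝ → ℝ≥0∞} (hf : Measurable f)
    (hh : Measurable h) :
    ∫⁻ ω, ∑' n, f (stoppedWalk X a n ω) * h (X n ω) ∂μ
      = (∑' n, ∫⁻ ω, f (stoppedWalk X a n ω) ∂μ) * ∫⁻ ω, h (X 0 ω) ∂μ := by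
  have hfY n := hf.comp (measurable_stoppedWalk hmeas a n)
  rw [lintegral_tsum (f := fun n ω => f (stoppedWalk X a n ω) * h (X n ω))
      fun n => ((hfY n).mul (hh.comp (hmeas n))).aemeasurable,
    ← ENNReal.tsum_mul_right]
  refine tsum_congr fun n => ?_
  refine (lintegral_mul_eq_lintegral_mul_lintegral_of_indepFun (hfY n) (hh.comp (hmeas n))
    ((indepFun_stoppedWalk hmeas hindep a n).comp hf hh)).trans ?_
  exact congrArg _ ((hident n).comp hh).lintegral_eq

lemma lintegral_exp_lastJump_le [IsProbabilityMeasure μ] (hmeas : ∀ i, Measurable (X i))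
    (hindep : iIndepFun X μ) (hident : ∀ i, IdentDistrib (X i) (X 0) μ μ) {δ A B : ℝ}
    (hδ : 0 ≤ δ) (hB : 0 ≤ B) (hBA : B ≤ A)
    (hsuper : ∀ b : ℝ, 0 ≤ b →
      exp (-δ * b) + ∫ ω, barrier δ A B (b + X 0 ω) ∂μ ≤ barrier δ A B b)
    (hM : Integrable (fun ω => exp (-(1 + δ) * X 0 ω)) μ) {a : ℝ} (ha : 0 ≤ a) :
    ∫⁻ ω, ENNReal.ofReal
        (exp (walk X a ((hitBelow X a 0 ω).toNat - 1) ω - stopBelow X a 0 ω)) ∂μ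
      ≤ ENNReal.ofReal (1 + A * ∫ ω, exp (-(1 + δ) * X 0 ω) ∂μ) := by
  have hgreen := tsum_lintegral_stoppedWalk_le hmeas hindep hident
    (measurable_killedExp δ).ennreal_ofReal (measurable_barrier δ A B).ennreal_ofReal
    (fun y hy => by simp [killedExp_of_neg δ hy])
    (fun b hb => by
      simpa [killedExp_of_nonneg δ hb] using
        ofReal_add_lintegral_barrier_le (hmeas 0) hδ hB hBA (hsuper b hb)) a
  calc _ ≤ ∫⁻ ω, (1 + ∑' n, ENNReal.ofReal (killedExp δ (stoppedWalk X a n ω))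
          * ENNReal.ofReal (exp (-(1 + δ) * X n ω))) ∂μ :=
        lintegral_mono (ofReal_exp_lastJump_le X ha hδ)
    _ = 1 + (∑' n, ∫⁻ ω, ENNReal.ofReal (killedExp δ (stoppedWalk X a n ω)) ∂μ)
          * ∫⁻ ω, ENNReal.ofReal (exp (-(1 + δ) * X 0 ω)) ∂μ := by
        rw [lintegral_add_left measurable_const, lintegral_const, measure_univ, one_mul,
          lintegral_tsum_stoppedWalk_mul hmeas hindep hident a
          (h := fun x => ENNReal.ofReal (exp (-(1 + δ) * x)))
          (measurable_killedExp δ).ennreal_ofReal (by fun_prop)]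
    _ ≤ 1 + ENNReal.ofReal A * ENNReal.ofReal (∫ ω, exp (-(1 + δ) * X 0 ω) ∂μ) := by
        rw [ofReal_integral_eq_lintegral_ofReal hM (ae_of_all _ fun _ => (exp_pos _).le)]
        gcongr
        exact hgreen.trans (ENNReal.ofReal_le_ofReal (barrier_le hB (hB.trans hBA) a))
    _ = ENNReal.ofReal (1 + A * ∫ ω, exp (-(1 + δ) * X 0 ω) ∂μ) := by
        rw [← ENNReal.ofReal_mul (hB.trans hBA), ← ENNReal.ofReal_one,
          ← ENNReal.ofReal_add zero_le_one
            (mul_nonneg (hB.trans hBA) (integral_nonneg fun _ => (exp_pos _).le))]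

/-- Lemma `lem:estcrit`, (diftau0). For a centered random walk with positive
variance and exponential moments on `(-(1+η), η)`, there is `c > 1` such that for all `L ≥ 1`
and `0 ≤ a ≤ L`: `E_a[e^{S_{τ_0^- - 1} - S_{τ_0^-}}] ≤ c`. -/
theorem centered_last_jump_exponential_bound
    (μ : Measure Ω) [IsProbabilityMeasure μ]
    (X : ℕ → Ω → ℝ) (hmeas : ∀ i, Measurable (X i))
    (hindep : iIndepFun X μ)
    (hident : ∀ i, IdentDistrib (X i) (X 0) μ μ)
    (hcent : ∫ ω, X 0 ω ∂μ = 0)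
    (hvar : 0 < variance (X 0) μ)
    (η : ℝ) (hη : 0 < η)
    (hexp : ∀ u : ℝ, -(1 + η) < u → u < η →
      Integrable (fun ω => Real.exp (u * X 0 ω)) μ)
    :
    ∃ c : ℝ, 1 < c ∧ ∀ L : ℝ, 1 ≤ L → ∀ a : ℝ, 0 ≤ a → a ≤ L →
      ∫⁻ ω, ENNReal.ofReal
          (Real.exp (walk X a ((hitBelow X a 0 ω).toNat - 1) ω - stopBelow X a 0 ω)) ∂μ
        ≤ ENNReal.ofReal c := by
  have hδ : 0 < η / 2 := half_pos hη
  have hX0 : Integrable (X 0) μ := integrable_of_mem_interior_integrableExpSet <|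
    mem_interior.mpr ⟨_, fun u hu => hexp u hu.1 hu.2, isOpen_Ioo, by constructor <;> linarith⟩
  have hnondeg : ¬ X 0 =ᵐ[μ] 0 := fun h => hvar.ne' (by simp [variance_congr h])
  obtain ⟨A, B, hB, hBA, hsuper⟩ := exists_barrier (hmeas 0) hδ.le
    (hexp _ (by linarith) (by linarith)) (hexp _ (by linarith) (by linarith))
    (one_lt_integral_exp_neg_mul hX0 hcent hnondeg hδ.ne' (hexp _ (by linarith) (by linarith)))
  have hM := hexp (-(1 + η / 2)) (by linarith) (by linarith)
  refine ⟨1 + A * ∫ ω, exp (-(1 + η / 2) * X 0 ω) ∂μ,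
    by nlinarith [integral_exp_pos hM], fun L _ a ha _ => ?_⟩
  exact lintegral_exp_lastJump_le hmeas hindep hident hδ.le hB.le hBA hsuper hM ha
end

section
/- Let (S_n) be a centered real random walk with Var(S_1) > 0 and E[e^{u S_1}] < ∞ for all u ∈ (−(1+η), η) for some η > 0. Then there exists a constant c' > 0 such that for all L ≥ 1 and all 0 ≤ a ≤ L: ℙ_a(τ_0^- < τ_L^+) ≤ (L − a + c')/L and ℙ_a(τ_0^- > τ_L^+) ≤ (a + c')/L. -/
open MeasureTheory ProbabilityTheory Filter Topology Real
open scoped ENNReal NNReal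

variable {Ω : Type*} [MeasurableSpace Ω]

/-!
For `δ > 0` put `g(y) = y + 1 - exp(-δ y)`. For a centered increment `Y`,
`E g(z + Y) = g(z) - exp(-δ z) (E exp(-δ Y) - 1)`, and `E exp(-δ Y) > 1` by strict Jensen
because `Y` is not a.s. constant. This slack absorbs the error made by truncating `g` below at
`-M` (bounded through an exponential moment of order `δ' > δ`, once `M` is large), and capping at
`L` preserves superharmonicity. So `φ = min L (g (max · (-M)))` is bounded, superharmonic for the
walk on `[0, L]`, equal to `L` above `L` and at least `-R` everywhere. Iterating the one-step
inequality along the walk frozen at its exit from `[0, L]` (optional stopping) gives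
`(L + R) ℙ_a(τ_L^+ < τ_0^-) - R ≤ φ(a) ≤ a + 1`. The other bound is the same one for the
reflected walk `L - S`.
-/

namespace ExitProbability

noncomputable def testFn (δ y : ℝ) : ℝ := y + 1 - rexp (-δ * y)

noncomputable def truncTestFn (δ M L y : ℝ) : ℝ := min L (testFn δ (max y (-M)))

variable {δ δ' M L : ℝ}

lemma testFn_mono (hδ : 0 < δ) : Monotone (testFn δ) := fun y z hyz => by
  have : rexp (-δ * z) ≤ rexp (-δ * y) := exp_le_exp.2 (by nlinarith)
  simp only [testFn]; linarith

lemma testFn_le_add_one (y : ℝ) : testFn δ y ≤ y + 1 := by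
  simp only [testFn]; linarith [exp_pos (-δ * y)]

lemma neg_add_exp_le_testFn_neg (M : ℝ) : -(M + rexp (δ * M)) ≤ testFn δ (-M) := by
  simp only [testFn, neg_mul_neg]; linarith

lemma continuous_truncTestFn : Continuous (truncTestFn δ M L) := by
  unfold truncTestFn testFn; fun_prop

lemma truncTestFn_of_nonneg (hM : 0 ≤ M) {z : ℝ} (hz : 0 ≤ z) :
    truncTestFn δ M L z = min L (testFn δ z) := by
  rw [truncTestFn, max_eq_left (by linarith)]

lemma le_truncTestFn (hδ : 0 < δ) (hM : 0 ≤ M) (hL : 0 ≤ L) (y : ℝ) :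
    -(M + rexp (δ * M)) ≤ truncTestFn δ M L y :=
  le_min (by linarith [exp_pos (δ * M)])
    ((neg_add_exp_le_testFn_neg M).trans (testFn_mono hδ (le_max_right _ _)))

lemma abs_truncTestFn_le (hδ : 0 < δ) (hM : 0 ≤ M) (hL : 0 ≤ L) (y : ℝ) :
    |truncTestFn δ M L y| ≤ max L (M + rexp (δ * M)) :=
  abs_le.2 ⟨by linarith [le_truncTestFn hδ hM hL y, le_max_right L (M + rexp (δ * M))],
    (min_le_left _ _).trans (le_max_left _ _)⟩

lemma truncTestFn_eq_of_lt (hδ : 0 < δ) (hM : 0 ≤ M) (hL : 0 ≤ L) {y : ℝ} (hy : L < y) :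
    truncTestFn δ M L y = L := by
  rw [truncTestFn_of_nonneg hM (by linarith), min_eq_left]
  have : rexp (-δ * y) ≤ 1 := exp_le_one_iff.2 (by nlinarith)
  simp only [testFn]; linarith

lemma truncTestFn_le_add_one (hM : 0 ≤ M) {z : ℝ} (hz : 0 ≤ z) :
    truncTestFn δ M L z ≤ z + 1 := by
  rw [truncTestFn_of_nonneg hM hz]; exact (min_le_right _ _).trans (testFn_le_add_one z)

lemma testFn_add (z y : ℝ) :
    testFn δ (z + y) = z + 1 + y - rexp (-δ * z) * rexp (-δ * y) := by
  rw [testFn, ← exp_add]; ring_nf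

lemma testFn_max_le (hδ : 0 < δ) (hδδ' : δ ≤ δ') (hM : 0 ≤ M) (y : ℝ) :
    testFn δ (max y (-M))
      ≤ testFn δ y + (1 + δ⁻¹) * rexp (-((δ' - δ) * M)) * rexp (-δ' * y) := by
  rcases le_total (-M) y with hy | hy
  · have : 0 ≤ (1 + δ⁻¹) * rexp (-((δ' - δ) * M)) * rexp (-δ' * y) := by
      have := hδ.le; positivity
    rw [max_eq_left hy]; linarith
  rw [max_eq_right hy]
  have h_at : testFn δ (-M) ≤ 0 := by
    simp only [testFn, neg_mul_neg]; linarith [one_le_exp (by positivity : 0 ≤ δ * M)]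
  have h_lin : -y ≤ δ⁻¹ * rexp (-δ * y) := by
    rw [← div_eq_inv_mul, le_div_iff₀ hδ]; linarith [add_one_le_exp (-δ * y)]
  have h_shift : rexp (-δ * y) ≤ rexp (-((δ' - δ) * M)) * rexp (-δ' * y) := by
    rw [← exp_add]; exact exp_le_exp.2 (by nlinarith)
  have := exp_pos (-δ * y)
  simp only [testFn] at h_at ⊢
  nlinarith [inv_pos.2 hδ]

section Integral

variable {μ : Measure Ω} {Y : Ω → ℝ}

lemma integral_exp_neg_mul_add (δ z : ℝ) :
    ∫ ω, rexp (-δ * (z + Y ω)) ∂μ = rexp (-δ * z) * ∫ ω, rexp (-δ * Y ω) ∂μ := by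
  simp_rw [mul_add, exp_add, integral_const_mul]

variable [IsProbabilityMeasure μ]

lemma integral_testFn_add (hY : Integrable Y μ) (hcent : ∫ ω, Y ω ∂μ = 0)
    (hexp : Integrable (fun ω => rexp (-δ * Y ω)) μ) (z : ℝ) :
    ∫ ω, testFn δ (z + Y ω) ∂μ = z + 1 - rexp (-δ * z) * ∫ ω, rexp (-δ * Y ω) ∂μ := by
  simp_rw [testFn_add]
  rw [integral_sub (f := fun ω => z + 1 + Y ω) ((integrable_const _).add hY) (hexp.const_mul _),
    integral_add (integrable_const _) hY, integral_const_mul, hcent]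
  simp

lemma integral_truncTestFn_add_le (hδ : 0 < δ) (hδδ' : δ ≤ δ') (hM : 0 ≤ M) (hL : 0 ≤ L)
    (hY : Integrable Y μ) (hcent : ∫ ω, Y ω ∂μ = 0)
    (hexp : Integrable (fun ω => rexp (-δ * Y ω)) μ)
    (hexp' : Integrable (fun ω => rexp (-δ' * Y ω)) μ)
    (hgap : (1 + δ⁻¹) * rexp (-((δ' - δ) * M)) * ∫ ω, rexp (-δ' * Y ω) ∂μ
      ≤ (∫ ω, rexp (-δ * Y ω) ∂μ) - 1)
    {z : ℝ} (hz : 0 ≤ z) :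
    ∫ ω, truncTestFn δ M L (z + Y ω) ∂μ ≤ truncTestFn δ M L z := by
  set C := (1 + δ⁻¹) * rexp (-((δ' - δ) * M))
  have hint : Integrable (fun ω => truncTestFn δ M L (z + Y ω)) μ :=
    .of_bound (continuous_truncTestFn.comp_aestronglyMeasurable
      (aestronglyMeasurable_const.add hY.1)) _
      (ae_of_all _ fun ω => (abs_truncTestFn_le hδ hM hL _))
  have hint_test : Integrable (fun ω => testFn δ (z + Y ω)) μ := by
    simp_rw [testFn_add]; exact ((integrable_const _).add hY).sub (hexp.const_mul _)
  have hint_err : Integrable (fun ω => C * rexp (-δ' * (z + Y ω))) μ := by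
    simp_rw [mul_add, exp_add]; exact (hexp'.const_mul _).const_mul _
  have h_le_L : ∫ ω, truncTestFn δ M L (z + Y ω) ∂μ ≤ L := by
    simpa using integral_mono hint (integrable_const L) fun ω => min_le_left _ _
  have h_le_test : ∫ ω, truncTestFn δ M L (z + Y ω) ∂μ
      ≤ ∫ ω, (testFn δ (z + Y ω) + C * rexp (-δ' * (z + Y ω))) ∂μ :=
    integral_mono hint (hint_test.add hint_err) fun ω =>
      (min_le_right _ _).trans (testFn_max_le hδ hδδ' hM _)
  have h_err : C * rexp (-δ' * z) * ∫ ω, rexp (-δ' * Y ω) ∂μ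
      ≤ rexp (-δ * z) * ((∫ ω, rexp (-δ * Y ω) ∂μ) - 1) := by
    have : rexp (-δ' * z) ≤ rexp (-δ * z) := exp_le_exp.2 (by nlinarith)
    have : 0 ≤ C := by have := hδ.le; positivity
    have : 0 ≤ ∫ ω, rexp (-δ' * Y ω) ∂μ := integral_nonneg fun ω => (exp_pos _).le
    calc C * rexp (-δ' * z) * ∫ ω, rexp (-δ' * Y ω) ∂μ
        ≤ rexp (-δ * z) * (C * ∫ ω, rexp (-δ' * Y ω) ∂μ) := by
          rw [mul_comm C, mul_assoc]; gcongr
      _ ≤ _ := by gcongr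
  rw [truncTestFn_of_nonneg hM hz]
  refine le_min h_le_L (h_le_test.trans ?_)
  rw [integral_add hint_test hint_err, integral_testFn_add hY hcent hexp, integral_const_mul,
    integral_exp_neg_mul_add, testFn]
  linarith

lemma one_lt_integral_exp_neg_mul (hδ : 0 < δ) (hY : Integrable Y μ) (hcent : ∫ ω, Y ω ∂μ = 0)
    (hvar : 0 < variance Y μ) (hexp : Integrable (fun ω => rexp (-δ * Y ω)) μ) :
    1 < ∫ ω, rexp (-δ * Y ω) ∂μ := by
  have h_mean : ⨍ ω, -δ * Y ω ∂μ = 0 := by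
    rw [average_eq_integral, integral_const_mul, hcent, mul_zero]
  refine (strictConvexOn_exp.ae_eq_const_or_map_average_lt (f := fun ω => -δ * Y ω)
    continuousOn_exp isClosed_univ (ae_of_all _ fun _ => Set.mem_univ _) (hY.const_mul _)
    hexp).elim (fun h_const => ?_) (by rwa [h_mean, exp_zero, average_eq_integral] at ·)
  refine absurd hvar (not_lt.2 (le_of_eq ?_))
  have : Y =ᵐ[μ] fun _ => μ[Y] := by
    filter_upwards [h_const] with ω hω
    simp only [Function.const_apply, h_mean, mul_eq_zero, neg_eq_zero, hδ.ne', false_or] at hω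
    rw [hω, hcent]
  rw [variance, (evariance_eq_zero_iff hY.aemeasurable).2 this, ENNReal.toReal_zero]

end Integral

lemma exists_truncation_level (hδδ' : δ < δ') {A A' : ℝ} (hA : 1 < A) :
    ∃ M, 0 ≤ M ∧ (1 + δ⁻¹) * rexp (-((δ' - δ) * M)) * A' ≤ A - 1 := by
  have : Tendsto (fun M => (1 + δ⁻¹) * rexp (-((δ' - δ) * M)) * A') atTop (𝓝 0) := by
    simpa using ((tendsto_exp_neg_atTop_nhds_zero.comp
      (tendsto_id.const_mul_atTop (sub_pos.2 hδδ'))).const_mul (1 + δ⁻¹)).mul_const A'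
  exact ((this.eventually (ge_mem_nhds (sub_pos.2 hA))).and (eventually_ge_atTop 0)).exists.imp
    fun M hM => ⟨hM.2, hM.1⟩

section Paths

omit [MeasurableSpace Ω]

noncomputable def exitStep (L z x : ℝ) : ℝ := if z ∈ Set.Icc 0 L then z + x else z

noncomputable def stoppedWalk (X : ℕ → Ω → ℝ) (a L : ℝ) : ℕ → Ω → ℝ
  | 0, _ => a
  | n + 1, ω => exitStep L (stoppedWalk X a L n ω) (X n ω)

lemma measurable_exitStep (L : ℝ) : Measurable fun p : ℝ × ℝ => exitStep L p.1 p.2 :=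
  Measurable.ite (measurableSet_Icc.preimage measurable_fst) (measurable_fst.add measurable_snd)
    measurable_fst

lemma walk_succ (X : ℕ → Ω → ℝ) (x : ℝ) (n : ℕ) (ω : Ω) :
    walk X x (n + 1) ω = walk X x n ω + X n ω := by
  simp only [walk, Finset.sum_range_succ, add_assoc]

lemma walk_neg (X : ℕ → Ω → ℝ) (c x : ℝ) (n : ℕ) (ω : Ω) :
    walk (-X) (c - x) n ω = c - walk X x n ω := by
  simp only [walk, Pi.neg_apply, Finset.sum_neg_distrib]; ring

lemma hitAbove_neg (X : ℕ → Ω → ℝ) (c x b : ℝ) (ω : Ω) :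
    hitAbove (-X) (c - x) (c - b) ω = hitBelow X x b ω := by
  simp only [hitAbove, hitBelow, walk_neg, sub_lt_sub_iff_left]

lemma hitBelow_neg (X : ℕ → Ω → ℝ) (c x b : ℝ) (ω : Ω) :
    hitBelow (-X) (c - x) (c - b) ω = hitAbove X x b ω := by
  simp only [hitAbove, hitBelow, walk_neg, sub_lt_sub_iff_left]

lemma setOf_hitBelow_lt_hitAbove_eq_neg (X : ℕ → Ω → ℝ) (a L : ℝ) :
    {ω | hitBelow X a 0 ω < hitAbove X a L ω}
      = {ω | hitAbove (-X) (L - a) L ω < hitBelow (-X) (L - a) 0 ω} := by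
  ext ω
  rw [Set.mem_ofPred_eq, Set.mem_ofPred_eq, ← hitAbove_neg X L a 0, ← hitBelow_neg X L a L,
    sub_zero, sub_self]

variable {X : ℕ → Ω → ℝ} {a L : ℝ}

lemma measurable_stoppedWalk_of_lt {m : MeasurableSpace Ω} {n : ℕ}
    (hX : ∀ i < n, Measurable[m] (X i)) : Measurable[m] (stoppedWalk X a L n) := by
  induction n with
  | zero => exact measurable_const
  | succ n ih =>
    exact (measurable_exitStep L).comp
      ((ih fun i hi => hX i (Nat.lt_succ_of_lt hi)).prodMk (hX n (Nat.lt_succ_self n)))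

lemma stoppedWalk_eq_walk {ω : Ω} {n : ℕ} (h : ∀ k < n, walk X a k ω ∈ Set.Icc 0 L) :
    stoppedWalk X a L n ω = walk X a n ω := by
  induction n with
  | zero => simp [stoppedWalk, walk]
  | succ n ih =>
    rw [stoppedWalk, ih fun k hk => h k (Nat.lt_succ_of_lt hk), exitStep,
      if_pos (h n (Nat.lt_succ_self n)), walk_succ]

lemma stoppedWalk_succ_of_lt {ω : Ω} {n : ℕ} (h : L < stoppedWalk X a L n ω) :
    stoppedWalk X a L (n + 1) ω = stoppedWalk X a L n ω := by
  rw [stoppedWalk, exitStep, if_neg fun hmem => h.not_ge hmem.2]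

lemma monotone_setOf_lt_stoppedWalk : Monotone fun n => {ω | L < stoppedWalk X a L n ω} :=
  monotone_nat_of_le_succ fun n ω (hω : L < stoppedWalk X a L n ω) => by
    simpa only [Set.mem_ofPred_eq, stoppedWalk_succ_of_lt hω] using hω

lemma setOf_hitAbove_lt_hitBelow_subset :
    {ω | hitAbove X a L ω < hitBelow X a 0 ω} ⊆ ⋃ n, {ω | L < stoppedWalk X a L n ω} := by
  intro ω (hω : hitAbove X a L ω < hitBelow X a 0 ω)
  have h_exit : ∃ n, L < walk X a n ω := by
    by_contra! h
    exact hω.ne_top (by simp only [hitAbove, iInf_eq_top]; exact fun n hn => absurd hn (h n).not_gt)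
  classical
  set t := Nat.find h_exit
  have h_hit : hitAbove X a L ω = t :=
    le_antisymm (iInf₂_le t (Nat.find_spec h_exit))
      (le_iInf₂ fun n hn => by exact_mod_cast Nat.find_min' h_exit hn)
  have h_inside : ∀ k < t, walk X a k ω ∈ Set.Icc 0 L := fun k hk => by
    refine ⟨not_lt.1 fun hneg => ?_, not_lt.1 (Nat.find_min h_exit hk)⟩
    have : hitBelow X a 0 ω ≤ k := iInf₂_le k hneg
    have : (t : ℕ∞) < k := h_hit ▸ hω.trans_le this
    exact absurd hk (not_lt.2 (by exact_mod_cast this.le))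
  exact Set.mem_iUnion.2 ⟨t, by
    simpa only [Set.mem_ofPred_eq, stoppedWalk_eq_walk h_inside] using Nat.find_spec h_exit⟩

end Paths

variable {μ : Measure Ω}

lemma integral_comp_le_of_indepFun {α β : Type*} [MeasurableSpace α] [MeasurableSpace β]
    [IsProbabilityMeasure μ] {W : Ω → α} {Y : Ω → β}
    (hW : Measurable W) (hY : Measurable Y) (hWY : IndepFun W Y μ)
    {F : α → β → ℝ} {G : α → ℝ} (hF : Measurable (Function.uncurry F)) (hG : Measurable G)
    {C : ℝ} (hFC : ∀ x y, |F x y| ≤ C) (hGC : ∀ x, |G x| ≤ C)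
    (hFG : ∀ x, ∫ ω, F x (Y ω) ∂μ ≤ G x) :
    ∫ ω, F (W ω) (Y ω) ∂μ ≤ ∫ ω, G (W ω) ∂μ := by
  have hF_int : Integrable (Function.uncurry F) ((μ.map W).prod (μ.map Y)) :=
    .of_bound hF.aestronglyMeasurable C (ae_of_all _ fun p => hFC p.1 p.2)
  calc ∫ ω, F (W ω) (Y ω) ∂μ = ∫ p, Function.uncurry F p ∂(μ.map fun ω => (W ω, Y ω)) :=
        (integral_map (hW.prodMk hY).aemeasurable hF.aestronglyMeasurable).symm
    _ = ∫ x, ∫ y, F x y ∂(μ.map Y) ∂(μ.map W) := by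
        rw [hWY.map_prod_eq_prod_map_map hW.aemeasurable hY.aemeasurable,
          integral_prod _ hF_int]; rfl
    _ ≤ ∫ x, G x ∂(μ.map W) := by
        refine integral_mono hF_int.integral_prod_left
          (.of_bound hG.aestronglyMeasurable C (ae_of_all _ hGC)) fun x => ?_
        have hFx : Measurable (F x) := hF.comp measurable_prodMk_left
        rw [integral_map hY.aemeasurable hFx.aestronglyMeasurable]
        exact hFG x
    _ = ∫ ω, G (W ω) ∂μ := integral_map hW.aemeasurable hG.aestronglyMeasurable

variable {X : ℕ → Ω → ℝ} {a L : ℝ}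

lemma measurable_stoppedWalk (hmeas : ∀ i, Measurable (X i)) (n : ℕ) :
    Measurable (stoppedWalk X a L n) :=
  measurable_stoppedWalk_of_lt fun i _ => hmeas i

lemma indepFun_stoppedWalk (hmeas : ∀ i, Measurable (X i)) (hindep : iIndepFun X μ) (n : ℕ) :
    IndepFun (stoppedWalk X a L n) (X n) μ := by
  rw [IndepFun_iff_Indep]
  have h := indep_iSup_of_disjoint (fun i => (hmeas i).comap_le)
    ((iIndepFun_iff_iIndep _ _ _).1 hindep) (S := Set.Iio n) (T := {n}) (by simp)
  rw [iSup_singleton] at h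
  refine indep_of_indep_of_le_left h (measurable_stoppedWalk_of_lt fun i hi => ?_).comap_le
  exact Measurable.of_comap_le (le_iSup₂ (f := fun i (_ : i ∈ Set.Iio n) =>
    MeasurableSpace.comap (X i) inferInstance) i hi)

lemma integral_comp_stoppedWalk_le [IsProbabilityMeasure μ] (hmeas : ∀ i, Measurable (X i))
    (hindep : iIndepFun X μ) (hident : ∀ i, IdentDistrib (X i) (X 0) μ μ)
    {φ : ℝ → ℝ} (hφ : Measurable φ) {C : ℝ} (hφC : ∀ y, |φ y| ≤ C)
    (hsuper : ∀ z ∈ Set.Icc 0 L, ∫ ω, φ (z + X 0 ω) ∂μ ≤ φ z) (n : ℕ) :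
    ∫ ω, φ (stoppedWalk X a L n ω) ∂μ ≤ φ a := by
  induction n with
  | zero => simp [stoppedWalk]
  | succ n ih =>
    refine le_trans ?_ ih
    refine integral_comp_le_of_indepFun (F := fun z x => φ (exitStep L z x))
      (measurable_stoppedWalk hmeas n) (hmeas n) (indepFun_stoppedWalk hmeas hindep n)
      (hφ.comp (measurable_exitStep L)) hφ (fun _ _ => hφC _) hφC fun z => ?_
    by_cases hz : z ∈ Set.Icc 0 L
    · simp only [exitStep, if_pos hz]
      exact ((hident n).comp (hφ.comp (measurable_const_add z))).integral_eq.trans_le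
        (hsuper z hz)
    · simp only [exitStep, if_neg hz, integral_const, probReal_univ, one_smul, le_rfl]

lemma measure_hitAbove_lt_hitBelow_le [IsProbabilityMeasure μ] (hmeas : ∀ i, Measurable (X i))
    (hindep : iIndepFun X μ) (hident : ∀ i, IdentDistrib (X i) (X 0) μ μ)
    {φ : ℝ → ℝ} (hφ : Measurable φ) {C : ℝ} (hφC : ∀ y, |φ y| ≤ C)
    (hsuper : ∀ z ∈ Set.Icc 0 L, ∫ ω, φ (z + X 0 ω) ∂μ ≤ φ z)
    {R : ℝ} (hφR : ∀ y, -R ≤ φ y) (hφL : ∀ y, L < y → L ≤ φ y) (hLR : 0 < L + R) :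
    μ {ω | hitAbove X a L ω < hitBelow X a 0 ω} ≤ ENNReal.ofReal ((φ a + R) / (L + R)) := by
  refine (measure_mono setOf_hitAbove_lt_hitBelow_subset).trans ?_
  rw [monotone_setOf_lt_stoppedWalk.measure_iUnion]
  refine iSup_le fun n => ?_
  set D := {ω | L < stoppedWalk X a L n ω}
  have hD : MeasurableSet D := measurableSet_lt measurable_const (measurable_stoppedWalk hmeas n)
  have h_ind : ∀ ω, D.indicator (fun _ => L + R) ω - R ≤ φ (stoppedWalk X a L n ω) := by
    intro ω
    by_cases hω : ω ∈ D
    · rw [Set.indicator_of_mem hω]; linarith [hφL _ hω]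
    · rw [Set.indicator_of_notMem hω]; linarith [hφR (stoppedWalk X a L n ω)]
  have h_int : ∫ ω, (D.indicator (fun _ => L + R) ω - R) ∂μ = (L + R) * μ.real D - R := by
    rw [integral_sub ((integrable_const _).indicator hD) (integrable_const R),
      integral_indicator_const _ hD, integral_const, probReal_univ, smul_eq_mul, one_smul,
      mul_comm]
  have h_le : (L + R) * μ.real D - R ≤ φ a :=
    calc (L + R) * μ.real D - R = ∫ ω, (D.indicator (fun _ => L + R) ω - R) ∂μ := h_int.symm
      _ ≤ ∫ ω, φ (stoppedWalk X a L n ω) ∂μ :=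
        integral_mono (((integrable_const _).indicator hD).sub (integrable_const R))
          (.of_bound (hφ.comp (measurable_stoppedWalk hmeas n)).aestronglyMeasurable C
            (ae_of_all _ fun ω => hφC _)) h_ind
      _ ≤ φ a := integral_comp_stoppedWalk_le hmeas hindep hident hφ hφC hsuper n
  rw [← ofReal_measureReal]
  exact ENNReal.ofReal_le_ofReal ((le_div_iff₀ hLR).2 (by linarith))

theorem exists_measure_hitAbove_lt_hitBelow_le [IsProbabilityMeasure μ]
    (hmeas : ∀ i, Measurable (X i)) (hindep : iIndepFun X μ)
    (hident : ∀ i, IdentDistrib (X i) (X 0) μ μ) (hint : Integrable (X 0) μ)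
    (hcent : ∫ ω, X 0 ω ∂μ = 0) (hvar : 0 < variance (X 0) μ) {θ : ℝ} (hθ : 0 < θ)
    (hexp : Integrable (fun ω => rexp (-θ * X 0 ω)) μ) :
    ∃ c : ℝ, 0 < c ∧ ∀ L : ℝ, 0 < L → ∀ a : ℝ, 0 ≤ a →
      μ {ω | hitAbove X a L ω < hitBelow X a 0 ω} ≤ ENNReal.ofReal ((a + c) / L) := by
  set δ := θ / 2
  have hδ : 0 < δ := half_pos hθ
  have hexp_δ : Integrable (fun ω => rexp (-δ * X 0 ω)) μ :=
    integrable_exp_mul_of_le_of_le hexp (by simp)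
      (neg_le_neg (half_le_self hθ.le)) (neg_nonpos.2 hδ.le)
  obtain ⟨M, hM, hgap⟩ := exists_truncation_level (δ := δ) (δ' := θ)
    (A' := ∫ ω, rexp (-θ * X 0 ω) ∂μ) (half_lt_self hθ)
    (one_lt_integral_exp_neg_mul hδ hint hcent hvar hexp_δ)
  set R := M + rexp (δ * M)
  have hR : 0 ≤ R := by positivity
  refine ⟨1 + R, by positivity, fun L hL a ha => ?_⟩
  have hsuper : ∀ z ∈ Set.Icc 0 L, ∫ ω, truncTestFn δ M L (z + X 0 ω) ∂μ ≤ truncTestFn δ M L z :=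
    fun z hz => integral_truncTestFn_add_le hδ (half_le_self hθ.le) hM hL.le hint hcent hexp_δ
      hexp hgap hz.1
  refine (measure_hitAbove_lt_hitBelow_le hmeas hindep hident continuous_truncTestFn.measurable
    (abs_truncTestFn_le hδ hM hL.le) hsuper (le_truncTestFn hδ hM hL.le)
    (fun y hy => (truncTestFn_eq_of_lt hδ hM hL.le hy).ge) (by positivity)).trans
    (ENNReal.ofReal_le_ofReal ?_)
  have := truncTestFn_le_add_one (δ := δ) (L := L) hM ha
  exact div_le_div₀ (by positivity) (by linarith) hL (by linarith)

end ExitProbability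

open ExitProbability in
/-- (pal1) and (pal2). For a centered random walk with positive variance and
exponential moments on `(-(1+η), η)`, there is `c' > 0` such that for all `L ≥ 1` and
`0 ≤ a ≤ L`: `ℙ_a(τ_0^- < τ_L^+) ≤ (L - a + c')/L` and `ℙ_a(τ_0^- > τ_L^+) ≤ (a + c')/L`. -/
theorem centered_exit_probability_bounds
    (μ : Measure Ω) [IsProbabilityMeasure μ]
    (X : ℕ → Ω → ℝ) (hmeas : ∀ i, Measurable (X i))
    (hindep : iIndepFun X μ)
    (hident : ∀ i, IdentDistrib (X i) (X 0) μ μ)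
    (hcent : ∫ ω, X 0 ω ∂μ = 0)
    (hvar : 0 < variance (X 0) μ)
    (η : ℝ) (hη : 0 < η)
    (hexp : ∀ u : ℝ, -(1 + η) < u → u < η →
      Integrable (fun ω => Real.exp (u * X 0 ω)) μ)
    :
    ∃ c : ℝ, 0 < c ∧ ∀ L : ℝ, 1 ≤ L → ∀ a : ℝ, 0 ≤ a → a ≤ L →
      μ {ω | hitBelow X a 0 ω < hitAbove X a L ω} ≤ ENNReal.ofReal ((L - a + c) / L) ∧
      μ {ω | hitAbove X a L ω < hitBelow X a 0 ω} ≤ ENNReal.ofReal ((a + c) / L) := by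
  have hint : Integrable (X 0) μ := integrable_of_mem_interior_integrableExpSet <|
    mem_interior_iff_mem_nhds.2 <| Filter.mem_of_superset (Ioo_mem_nhds (by linarith) hη)
      fun u hu => hexp u hu.1 hu.2
  obtain ⟨c₁, hc₁, h_up⟩ := exists_measure_hitAbove_lt_hitBelow_le hmeas hindep hident hint hcent
    hvar (half_pos hη) (hexp _ (by linarith) (by linarith))
  obtain ⟨c₂, -, h_down⟩ := exists_measure_hitAbove_lt_hitBelow_le (X := -X)
    (fun i => (hmeas i).neg) (hindep.comp _ fun _ => measurable_neg)
    (fun i => (hident i).comp measurable_neg) hint.neg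
    (by simp only [Pi.neg_apply, integral_neg, hcent, neg_zero])
    (by rwa [Pi.neg_apply, variance_neg]) (half_pos hη)
    (by simpa using hexp (η / 2) (by linarith) (by linarith))
  refine ⟨max c₁ c₂, lt_max_of_lt_left hc₁, fun L hL a ha haL => ⟨?_, ?_⟩⟩
  · rw [setOf_hitBelow_lt_hitAbove_eq_neg]
    refine (h_down L (by linarith) (L - a) (by linarith)).trans ?_
    gcongr; exact le_max_right _ _
  · refine (h_up L (by linarith) a ha).trans ?_
    gcongr; exact le_max_left _ _
end

section
/- Let (S_n) be a real random walk with negative drift E[S_1] < 0 such that E[e^{γ S_1}] = 1 for some γ > 0 and E[e^{u S_1}] < ∞ for all u ∈ (−η₁, γ + η₂), for some η₁, η₂ > 0. Then for every r with 0 < r < η₁ there is a constant c(r) > 0 such that for all a ≥ 0: E_a[ e^{−r S_{τ_0^-}} ] ≤ c(r). -/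
open MeasureTheory ProbabilityTheory Filter Topology Real
open scoped ENNReal NNReal

variable {Ω : Type*} [MeasurableSpace Ω]

/-! Write `E X = -m < 0` and fix `r < δ < η₁`; put `h(y) = K + C e^{-δy} - e^{-ry}`. For `C` small,
`h` is superharmonic for the walk on `[0, ∞)`: linearizing `e^{-r(x+X)} ≥ e^{-rx}(1 - rX)`, the
drift produces a gain `r m e^{-rx}` that beats the loss `C (E e^{-δX} - 1) e^{-δx}`. For `K` large,
`h ≥ e^{-ry}` everywhere, because `δ > r`. A superharmonic function dominating the payoff off
`[0, ∞)` dominates the expected payoff at the exit time (optional stopping, proved by induction on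
a time horizon, splitting off the first increment by independence), so
`E_a[e^{-r S_τ}; τ < ∞] ≤ h(a) ≤ K + C` for `a ≥ 0`. -/

namespace ProbabilityTheory

variable {μ : Measure Ω} {β : Type*} [MeasurableSpace β]

lemma iIndepFun.indepFun_head_tail {Y : ℕ → Ω → β} (hY : ∀ i, Measurable (Y i))
    (h : iIndepFun Y μ) : IndepFun (Y 0) (fun ω i => Y (i + 1) ω) μ := by
  let m : ℕ → MeasurableSpace Ω := fun i => MeasurableSpace.comap (Y i) inferInstance
  have hsplit : Indep (⨆ i ∈ ({0} : Set ℕ), m i) (⨆ i ∈ Set.Ioi 0, m i) μ :=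
    indep_iSup_of_disjoint (fun i => (hY i).comap_le) h (by simp)
  refine indep_of_indep_of_le hsplit
    (le_iSup₂ (f := fun i (_ : i ∈ ({0} : Set ℕ)) => m i) 0 rfl) ?_
  simp only [MeasurableSpace.pi, MeasurableSpace.comap_iSup, MeasurableSpace.comap_comp]
  exact iSup_le fun i => le_iSup₂ (f := fun i (_ : i ∈ Set.Ioi 0) => m i) (i + 1) i.succ_pos

lemma IndepFun.lintegral_comp_eq_lintegral_lintegral [IsFiniteMeasure μ] {γ : Type*}
    [MeasurableSpace γ] {f : Ω → β} {g : Ω → γ} (hfg : IndepFun f g μ) (hf : Measurable f)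
    (hg : Measurable g) {Φ : β × γ → ℝ≥0∞} (hΦ : Measurable Φ) :
    ∫⁻ ω, Φ (f ω, g ω) ∂μ = ∫⁻ b, ∫⁻ ω, Φ (b, g ω) ∂μ ∂(μ.map f) := by
  rw [← lintegral_map hΦ (hf.prodMk hg),
    (indepFun_iff_map_prod_eq_prod_map_map hf.aemeasurable hg.aemeasurable).1 hfg,
    lintegral_prod _ hΦ.aemeasurable]
  exact lintegral_congr fun b => lintegral_map (hΦ.comp measurable_prodMk_left) hg

end ProbabilityTheory

section ExitPayoff

open Finset

variable {A : Set ℝ} {g : ℝ → ℝ≥0∞}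

-- `g (S_τ) 1{τ ≤ N}`, for `τ` the first exit from `A` of the walk `x + s 0 + ⋯ + s (k - 1)`
open Classical in
noncomputable def exitPayoff (A : Set ℝ) (g : ℝ → ℝ≥0∞) : ℕ → ℝ → (ℕ → ℝ) → ℝ≥0∞
  | 0, x, _ => if x ∈ A then 0 else g x
  | N + 1, x, s => if x ∈ A then exitPayoff A g N (x + s 0) (fun i => s (i + 1)) else g x

lemma exitPayoff_of_notMem {x : ℝ} (hx : x ∉ A) (N : ℕ) (s : ℕ → ℝ) :
    exitPayoff A g N x s = g x := by
  cases N <;> simp [exitPayoff, hx]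

lemma exitPayoff_succ_of_mem {x : ℝ} (hx : x ∈ A) (N : ℕ) (s : ℕ → ℝ) :
    exitPayoff A g (N + 1) x s = exitPayoff A g N (x + s 0) (fun i => s (i + 1)) := by
  simp [exitPayoff, hx]

lemma monotone_exitPayoff (x : ℝ) (s : ℕ → ℝ) :
    Monotone fun N => exitPayoff A g N x s := by
  refine monotone_nat_of_le_succ fun N => ?_
  induction N generalizing x s with
  | zero => by_cases hx : x ∈ A <;> simp [exitPayoff, hx]
  | succ N ih =>
    by_cases hx : x ∈ A
    · simpa only [exitPayoff_succ_of_mem hx] using ih _ _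
    · simp [exitPayoff_of_notMem hx]

lemma exitPayoff_eq_of_first_exit {x : ℝ} {s : ℕ → ℝ} {n : ℕ}
    (hstay : ∀ k < n, x + ∑ i ∈ range k, s i ∈ A) (hexit : x + ∑ i ∈ range n, s i ∉ A) :
    exitPayoff A g n x s = g (x + ∑ i ∈ range n, s i) := by
  induction n generalizing x s with
  | zero => simpa using exitPayoff_of_notMem (by simpa using hexit) 0 s
  | succ n ih =>
    have hshift : ∀ k, x + s 0 + ∑ i ∈ range k, s (i + 1) = x + ∑ i ∈ range (k + 1), s i :=
      fun k => by rw [sum_range_succ']; ring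
    rw [exitPayoff_succ_of_mem (by simpa using hstay 0 n.succ_pos), ih, hshift]
    · exact fun k hk => hshift k ▸ hstay (k + 1) (by omega)
    · rwa [hshift]

lemma measurable_exitPayoff (hA : MeasurableSet A) (hg : Measurable g) (N : ℕ) :
    Measurable fun p : ℝ × (ℕ → ℝ) => exitPayoff A g N p.1 p.2 := by
  induction N with
  | zero => exact Measurable.ite (measurable_fst hA) measurable_const (hg.comp measurable_fst)
  | succ N ih =>
    have hstep : Measurable fun p : ℝ × (ℕ → ℝ) => (p.1 + p.2 0, fun i => p.2 (i + 1)) := by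
      fun_prop
    exact Measurable.ite (measurable_fst hA) (ih.comp hstep) (hg.comp measurable_fst)

end ExitPayoff

theorem lintegral_exitPayoff_le {μ : Measure Ω} [IsProbabilityMeasure μ] {Y : ℕ → Ω → ℝ}
    (hY : ∀ i, Measurable (Y i)) (hind : iIndepFun Y μ) {ν : Measure ℝ}
    (hlaw : ∀ i, μ.map (Y i) = ν) {A : Set ℝ} (hA : MeasurableSet A) {g : ℝ → ℝ≥0∞}
    (hg : Measurable g) {H : ℝ → ℝ≥0∞} (hH : ∀ x ∈ A, ∫⁻ u, H (x + u) ∂ν ≤ H x)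
    (hgH : ∀ x ∉ A, g x ≤ H x) (N : ℕ) (x : ℝ) :
    ∫⁻ ω, exitPayoff A g N x (fun i => Y i ω) ∂μ ≤ H x := by
  induction N generalizing Y x with
  | zero => by_cases hx : x ∈ A <;> simp [exitPayoff, hx, hgH]
  | succ N ih =>
    by_cases hx : x ∈ A
    · have hΦ : Measurable fun p : ℝ × (ℕ → ℝ) => exitPayoff A g N (x + p.1) p.2 :=
        (measurable_exitPayoff hA hg N).comp ((measurable_const.add measurable_fst).prodMk
          measurable_snd)
      simp_rw [exitPayoff_succ_of_mem hx]
      rw [(hind.indepFun_head_tail hY).lintegral_comp_eq_lintegral_lintegral (hY 0)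
        (measurable_pi_lambda _ fun i => hY (i + 1)) hΦ, hlaw 0]
      refine (lintegral_mono fun u => ?_).trans (hH x hx)
      exact ih (fun i => hY (i + 1)) (hind.precomp Nat.succ_injective) (fun i => hlaw (i + 1)) _
    · simpa [exitPayoff_of_notMem hx] using hgH x hx

section FirstPassage

omit [MeasurableSpace Ω]

variable {X : ℕ → Ω → ℝ} {x a : ℝ} {ω : Ω}

lemma hitBelow_eq_find (h : ∃ n, walk X x n ω < a) : hitBelow X x a ω = Nat.find h :=
  le_antisymm (iInf₂_le (Nat.find h) (Nat.find_spec h))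
    (le_iInf₂ fun _ hn => by exact_mod_cast Nat.find_min' h hn)

lemma hitBelow_eq_top (h : ∀ n, a ≤ walk X x n ω) : hitBelow X x a ω = ⊤ :=
  iInf₂_eq_top.2 fun n hn => absurd hn (h n).not_gt

-- `g x` covers the event that the walk never goes below `0`, where `stopBelow` is `x`
lemma apply_stopBelow_le_add_iSup_exitPayoff (g : ℝ → ℝ≥0∞) :
    g (stopBelow X x 0 ω) ≤ g x + ⨆ N, exitPayoff (Set.Ici 0) g N x (fun i => X i ω) := by
  by_cases h : ∃ n, walk X x n ω < 0
  · have hexit : stopBelow X x 0 ω = walk X x (Nat.find h) ω := by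
      simp [stopBelow, hitBelow_eq_find h]
    rw [hexit, walk, ← exitPayoff_eq_of_first_exit (A := Set.Ici 0) (g := g)
      (fun k hk => not_lt.1 (Nat.find_min h hk)) (Set.notMem_Ici.2 (Nat.find_spec h))]
    exact (le_iSup (fun N => exitPayoff (Set.Ici 0) g N x (fun i => X i ω)) _).trans le_add_self
  · push Not at h
    simp [stopBelow, hitBelow_eq_top h, walk]

end FirstPassage

theorem lintegral_comp_stopBelow_le {μ : Measure Ω} [IsProbabilityMeasure μ] {Y : ℕ → Ω → ℝ}
    (hY : ∀ i, Measurable (Y i)) (hind : iIndepFun Y μ) {ν : Measure ℝ}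
    (hlaw : ∀ i, μ.map (Y i) = ν) {g : ℝ → ℝ≥0∞} (hg : Measurable g) {H : ℝ → ℝ≥0∞}
    (hH : ∀ x, 0 ≤ x → ∫⁻ u, H (x + u) ∂ν ≤ H x) (hgH : ∀ x < 0, g x ≤ H x) (x : ℝ) :
    ∫⁻ ω, g (stopBelow Y x 0 ω) ∂μ ≤ g x + H x := by
  have hmeas : ∀ N, Measurable fun ω => exitPayoff (Set.Ici 0) g N x (fun i => Y i ω) :=
    fun N => (measurable_exitPayoff measurableSet_Ici hg N).comp
      (measurable_const.prodMk (measurable_pi_lambda _ hY))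
  calc ∫⁻ ω, g (stopBelow Y x 0 ω) ∂μ
      ≤ ∫⁻ ω, g x + ⨆ N, exitPayoff (Set.Ici 0) g N x (fun i => Y i ω) ∂μ :=
        lintegral_mono fun ω => apply_stopBelow_le_add_iSup_exitPayoff g
    _ = g x + ⨆ N, ∫⁻ ω, exitPayoff (Set.Ici 0) g N x (fun i => Y i ω) ∂μ := by
        rw [lintegral_add_left measurable_const, lintegral_const, measure_univ, mul_one,
          lintegral_iSup hmeas fun N M hNM ω => monotone_exitPayoff _ _ hNM]
    _ ≤ g x + H x := by
        gcongr
        exact iSup_le fun N => lintegral_exitPayoff_le hY hind hlaw measurableSet_Ici hg hH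
          (fun y hy => hgH y (not_le.1 hy)) N x

noncomputable def undershootBound (K C δ r y : ℝ) : ℝ := K + C * exp (-δ * y) - exp (-r * y)

section UndershootBound

variable {K C δ r : ℝ}

lemma exists_mul_exp_le_add_mul_exp {a : ℝ} (hr : 0 ≤ r) (hrδ : r < δ) (ha : 0 ≤ a)
    (hC : 0 < C) : ∃ K, ∀ y, a * exp (-r * y) ≤ K + C * exp (-δ * y) := by
  have hdecay : Tendsto (fun L => a * exp (-((δ - r) * L))) atTop (𝓝 0) := by
    simpa using (tendsto_exp_neg_atTop_nhds_zero.comp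
      (tendsto_id.const_mul_atTop (sub_pos.2 hrδ))).const_mul a
  obtain ⟨L, hL⟩ := (hdecay.eventually (gt_mem_nhds hC)).exists
  refine ⟨a * exp (r * L), fun y => ?_⟩
  rcases le_or_gt (-y) L with hy | hy
  · have : a * exp (-r * y) ≤ a * exp (r * L) :=
      mul_le_mul_of_nonneg_left (exp_le_exp.2 (by nlinarith)) ha
    nlinarith [exp_pos (-δ * y)]
  · have : a * exp (-r * y) ≤ a * exp (-((δ - r) * L)) * exp (-δ * y) := by
      rw [mul_assoc, ← exp_add]; gcongr; nlinarith
    nlinarith [exp_pos (-δ * y), exp_pos (r * L)]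

lemma exp_le_undershootBound (hK : ∀ y, 2 * exp (-r * y) ≤ K + C * exp (-δ * y)) (y : ℝ) :
    exp (-r * y) ≤ undershootBound K C δ r y := by
  unfold undershootBound; linarith [hK y]

lemma undershootBound_le_of_nonneg (hC : 0 ≤ C) (hδ : 0 ≤ δ) {y : ℝ} (hy : 0 ≤ y) :
    undershootBound K C δ r y ≤ K + C := by
  have : exp (-δ * y) ≤ 1 := exp_le_one_iff.2 (by nlinarith)
  unfold undershootBound; nlinarith [exp_pos (-r * y)]

lemma lintegral_undershootBound_le {ν : Measure ℝ} [IsProbabilityMeasure ν] (hr : 0 ≤ r)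
    (hrδ : r ≤ δ) (hK : ∀ y, 2 * exp (-r * y) ≤ K + C * exp (-δ * y))
    (hint : Integrable (fun u => u) ν) (hexp : Integrable (fun u => exp (-δ * u)) ν)
    (hmean : ∫ u, u ∂ν ≤ 0) (hC : C * (∫ u, exp (-δ * u) ∂ν - 1) ≤ -(r * ∫ u, u ∂ν))
    {x : ℝ} (hx : 0 ≤ x) :
    ∫⁻ u, ENNReal.ofReal (undershootBound K C δ r (x + u)) ∂ν
      ≤ ENNReal.ofReal (undershootBound K C δ r x) := by
  set P : ℝ → ℝ := fun u => (K - exp (-r * x)) + C * exp (-δ * x) * exp (-δ * u)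
    + r * exp (-r * x) * u with hP
  have hle : ∀ u, undershootBound K C δ r (x + u) ≤ P u := fun u => by
    have hlin : exp (-r * x) * (1 - r * u) ≤ exp (-r * (x + u)) := by
      rw [mul_add, exp_add]
      exact mul_le_mul_of_nonneg_left (by linarith [add_one_le_exp (-r * u)]) (exp_pos _).le
    have hsplit : exp (-δ * (x + u)) = exp (-δ * x) * exp (-δ * u) := by
      rw [← exp_add]; ring_nf
    simp only [undershootBound, hP, hsplit]
    nlinarith
  have hPint : Integrable P ν :=
    ((integrable_const _).add (hexp.const_mul _)).add (hint.const_mul _)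
  have hPnonneg : ∀ u, 0 ≤ P u := fun u =>
    (exp_pos _).le.trans ((exp_le_undershootBound hK (x + u)).trans (hle u))
  have hintP : ∫ u, P u ∂ν = (K - exp (-r * x)) + C * exp (-δ * x) * ∫ u, exp (-δ * u) ∂ν
      + r * exp (-r * x) * ∫ u, u ∂ν := by
    simp only [hP]
    rw [integral_add _ (hint.const_mul _), integral_add (integrable_const _) (hexp.const_mul _),
      integral_const, integral_const_mul, integral_const_mul]
    · simp
    · exact (integrable_const _).add (hexp.const_mul _)
  have hdecay : exp (-δ * x) ≤ exp (-r * x) := exp_le_exp.2 (by nlinarith)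
  calc ∫⁻ u, ENNReal.ofReal (undershootBound K C δ r (x + u)) ∂ν
      ≤ ∫⁻ u, ENNReal.ofReal (P u) ∂ν := lintegral_mono fun u => ENNReal.ofReal_le_ofReal (hle u)
    _ = ENNReal.ofReal (∫ u, P u ∂ν) :=
      (ofReal_integral_eq_lintegral_ofReal hPint (ae_of_all _ hPnonneg)).symm
    _ ≤ ENNReal.ofReal (undershootBound K C δ r x) := by
      refine ENNReal.ofReal_le_ofReal ?_
      rw [hintP, undershootBound]
      nlinarith [exp_pos (-δ * x), mul_nonneg hr (neg_nonneg.2 hmean)]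

lemma exists_superharmonic_undershootBound {ν : Measure ℝ} [IsProbabilityMeasure ν] (hr : 0 < r)
    (hrδ : r < δ) (hint : Integrable (fun u => u) ν) (hexp : Integrable (fun u => exp (-δ * u)) ν)
    (hmean : ∫ u, u ∂ν < 0) :
    ∃ K C, 0 < C ∧ 2 ≤ K + C ∧ (∀ y, exp (-r * y) ≤ undershootBound K C δ r y) ∧
      ∀ x, 0 ≤ x → ∫⁻ u, ENNReal.ofReal (undershootBound K C δ r (x + u)) ∂ν
        ≤ ENNReal.ofReal (undershootBound K C δ r x) := by
  have hφ : 0 < ∫ u, exp (-δ * u) ∂ν := integral_exp_pos hexp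
  have hC0 : 0 < r * -(∫ u, u ∂ν) / ∫ u, exp (-δ * u) ∂ν :=
    div_pos (mul_pos hr (neg_pos.2 hmean)) hφ
  obtain ⟨K, hK⟩ := exists_mul_exp_le_add_mul_exp hr.le hrδ zero_le_two hC0
  refine ⟨K, _, hC0, by simpa using hK 0, exp_le_undershootBound hK,
    fun x hx => lintegral_undershootBound_le hr.le hrδ.le hK hint hexp hmean.le ?_ hx⟩
  have : r * -(∫ u, u ∂ν) / (∫ u, exp (-δ * u) ∂ν) * ∫ u, exp (-δ * u) ∂ν
      = -(r * ∫ u, u ∂ν) := by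
    rw [div_mul_cancel₀ _ hφ.ne']; ring
  nlinarith

end UndershootBound

theorem negative_drift_undershoot_exponential_bound_general
    (μ : Measure Ω) [IsProbabilityMeasure μ]
    (X : ℕ → Ω → ℝ) (hmeas : ∀ i, Measurable (X i))
    (hindep : iIndepFun X μ)
    (hident : ∀ i, IdentDistrib (X i) (X 0) μ μ)
    (hdrift : ∫ ω, X 0 ω ∂μ < 0)
    (γ η₁ η₂ : ℝ) (hγ : 0 < γ) (hη₂ : 0 < η₂)
    (hexp : ∀ u : ℝ, -η₁ < u → u < γ + η₂ →
      Integrable (fun ω => Real.exp (u * X 0 ω)) μ)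
    (r : ℝ) (hr0 : 0 < r) (hr : r < η₁) :
    ∃ c : ℝ, 0 < c ∧ ∀ a : ℝ, 0 ≤ a →
      ∫⁻ ω, ENNReal.ofReal (Real.exp (-r * stopBelow X a 0 ω)) ∂μ ≤ ENNReal.ofReal c := by
  obtain ⟨δ, hrδ, hδη⟩ := exists_between hr
  obtain ⟨ν, hν⟩ : ∃ ν, μ.map (X 0) = ν := ⟨_, rfl⟩
  have : IsProbabilityMeasure ν := hν ▸ Measure.isProbabilityMeasure_map (hmeas 0).aemeasurable
  have hX : Integrable (X 0) μ := by
    by_contra h; rw [integral_undef h] at hdrift; exact hdrift.false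
  have hνint : Integrable (fun u => u) ν :=
    hν ▸ (integrable_map_measure aestronglyMeasurable_id (hmeas 0).aemeasurable).2 hX
  have hνexp : Integrable (fun u => exp (-δ * u)) ν :=
    hν ▸ (integrable_map_measure (by fun_prop) (hmeas 0).aemeasurable).2
      (hexp _ (by linarith) (by linarith))
  have hmean : ∫ u, u ∂ν < 0 := by
    rwa [← hν, integral_map (f := fun u => u) (hmeas 0).aemeasurable (by fun_prop)]
  obtain ⟨K, C, hC0, hKC, hpayoff, hH⟩ :=
    exists_superharmonic_undershootBound hr0 hrδ hνint hνexp hmean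
  refine ⟨1 + (K + C), by linarith, fun a ha => ?_⟩
  calc ∫⁻ ω, ENNReal.ofReal (exp (-r * stopBelow X a 0 ω)) ∂μ
      ≤ ENNReal.ofReal (exp (-r * a)) + ENNReal.ofReal (undershootBound K C δ r a) :=
        lintegral_comp_stopBelow_le hmeas hindep (fun i => (hident i).map_eq.trans hν)
          (by fun_prop) hH (fun x _ => ENNReal.ofReal_le_ofReal (hpayoff x)) a
    _ ≤ ENNReal.ofReal 1 + ENNReal.ofReal (K + C) := by
        gcongr
        · exact exp_le_one_iff.2 (by nlinarith)
        · exact undershootBound_le_of_nonneg hC0.le (by linarith) ha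
    _ = ENNReal.ofReal (1 + (K + C)) := (ENNReal.ofReal_add zero_le_one (by linarith)).symm

/-- Lemma `lem:estsub`, (est1sub). For a random walk with negative drift
such that `E[e^{γ S_1}] = 1` and exponential moments on `(-η₁, γ + η₂)`: for every
`0 < r < η₁` there is `c(r) > 0` such that for all `a ≥ 0`, `E_a[e^{-r S_{τ_0^-}}] ≤ c(r)`. -/
theorem negative_drift_undershoot_exponential_bound
    (μ : Measure Ω) [IsProbabilityMeasure μ]
    (X : ℕ → Ω → ℝ) (hmeas : ∀ i, Measurable (X i))
    (hindep : iIndepFun X μ)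
    (hident : ∀ i, IdentDistrib (X i) (X 0) μ μ)
    (hdrift : ∫ ω, X 0 ω ∂μ < 0)
    (γ η₁ η₂ : ℝ) (hγ : 0 < γ) (hη₁ : 0 < η₁) (hη₂ : 0 < η₂)
    (hγ1 : ∫ ω, Real.exp (γ * X 0 ω) ∂μ = 1)
    (hexp : ∀ u : ℝ, -η₁ < u → u < γ + η₂ →
      Integrable (fun ω => Real.exp (u * X 0 ω)) μ)
    (r : ℝ) (hr0 : 0 < r) (hr : r < η₁) :
    ∃ c : ℝ, 0 < c ∧ ∀ a : ℝ, 0 ≤ a →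
      ∫⁻ ω, ENNReal.ofReal (Real.exp (-r * stopBelow X a 0 ω)) ∂μ ≤ ENNReal.ofReal c :=
  negative_drift_undershoot_exponential_bound_general μ X hmeas hindep hident hdrift γ η₁ η₂ hγ hη₂
    hexp r hr0 hr
end
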